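/- arXiv:1407.6258 — 4 statements merged into one kernel-verified Lean document; each statement's English description precedes it below -/
import Mathlib

section
/- For every n ≥ 1, the ℚ-vector space (under pointwise operations) of stable x-families f = (f_{2m+1})_{m≥0} satisfying equation (E_x) and such that every f_{2m+1} is homogeneous of degree n has dimension at most 2^{n−1}. -/
open MvPolynomial
open scoped Classical

noncomputable section

/-- The order condition for a function `r : α → Fin N` (labels `0,…,N-1` standing for
`1,…,N`) with respect to a rank function `ht` on the poset `α`. -/
def OrderCond {α : Type} [PartialOrder α] (ht : α → ℕ) {N : ℕ} (r : α → Fin N) : Prop :=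
  (∀ x y : α, x ≤ y → r x ≤ r y) ∧ ∀ x y : α, x < y → Odd (ht x) → r x < r y

/-- `ht` is a rank function on the poset `α`: minimal elements have height `0` and
covering relations increase the height by exactly one. -/
def IsRanked {α : Type} [PartialOrder α] (ht : α → ℕ) : Prop :=
  (∀ x : α, IsMin x → ht x = 0) ∧ ∀ x y : α, x ⋖ y → ht y = ht x + 1

/-- The polynomial `N_P^(m)`, an element of `ℚ[p₁,…,p_{m+1},q₁,…,q_m]`;
the variable `Sum.inl j` is `p_{j+1}` and `Sum.inr j` is `q_{j+1}` (0-indexed). -/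
def NP (α : Type) [Fintype α] [PartialOrder α] (ht : α → ℕ) (m : ℕ) :
    MvPolynomial (ℕ ⊕ ℕ) ℚ :=
  ∑ r : α → Fin (m + 1),
    if OrderCond ht r ∧ ∀ v, Odd (ht v) → (r v : ℕ) < m then
      ∏ v : α, if Even (ht v) then X (Sum.inl (r v : ℕ)) else X (Sum.inr (r v : ℕ))
    else 0

/-- The polynomial `F_P^(N)`, an element of `ℚ[x₁,…,x_N]`; variable `j` is `x_{j+1}`. -/
def FP (α : Type) [Fintype α] [PartialOrder α] (ht : α → ℕ) (N : ℕ) :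
    MvPolynomial ℕ ℚ :=
  ∑ r : α → Fin N, if OrderCond ht r then ∏ v : α, X (r v : ℕ) else 0

/-- A stable x-family `(f_{2m+1})_{m ≥ 0}`: `f m` stands for `f_{2m+1} ∈ ℚ[x₁,…,x_{2m+1}]`
(variable `k` is `x_{k+1}`), with `f_{2m+3}(x₁,…,x_{2m+1},0,0) = f_{2m+1}`. -/
def IsStableX (f : ℕ → MvPolynomial ℕ ℚ) : Prop :=
  (∀ m, (f m).vars ⊆ Finset.range (2 * m + 1)) ∧
  ∀ m, aeval (fun k => if k < 2 * m + 1 then (X k : MvPolynomial ℕ ℚ) else 0) (f (m + 1)) = f m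

/-- Equation (E_x): for all (paper) `m ≥ 1` and `1 ≤ i ≤ 2m`, substituting `x_{i+1} := x_i`
in `f_{2m+1}` yields `f_{2m-1}(x₁,…,x_{i-1},x_{i+2},…,x_{2m+1})`.  Here `m, i` are 0-indexed:
`f (m+1)` is `f_{2m+3}` and the Lean variable `i` is the paper variable `i+1`. -/
def SatisfiesEx (f : ℕ → MvPolynomial ℕ ℚ) : Prop :=
  ∀ m i : ℕ, i < 2 * m + 2 →
    aeval (fun k => if k = i + 1 then (X i : MvPolynomial ℕ ℚ) else X k) (f (m + 1)) =
    aeval (fun k => if k < i then (X k : MvPolynomial ℕ ℚ) else X (k + 2)) (f m)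

/-- A stable pq-family `(h_m)_{m ≥ 0}` with `h m ∈ ℚ[p₁,…,p_{m+1},q₁,…,q_m]`
(`Sum.inl j` is `p_{j+1}`, `Sum.inr j` is `q_{j+1}`), such that substituting
`p_{m+2} := 0` and `q_{m+1} := 0` in `h (m+1)` yields `h m`. -/
def IsStablePQ (h : ℕ → MvPolynomial (ℕ ⊕ ℕ) ℚ) : Prop :=
  (∀ m, (h m).vars ⊆ (Finset.range (m + 1)).image Sum.inl ∪ (Finset.range m).image Sum.inr) ∧
  ∀ m, aeval (Sum.elim
      (fun j => if j = m + 1 then 0 else (X (Sum.inl j) : MvPolynomial (ℕ ⊕ ℕ) ℚ))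
      (fun j => if j = m then 0 else X (Sum.inr j))) (h (m + 1)) = h m

/-- Equations (E_pq) for a pq-family; the Lean index `i ≤ m` is the paper index `i+1 ≤ m+1`
and `h (m+1)`, `h m` are the paper `h_m`, `h_{m-1}`.  The first equation sets `q_{i+1} := 0`,
the second sets `p_{i+1} := 0`. -/
def SatisfiesEpq (h : ℕ → MvPolynomial (ℕ ⊕ ℕ) ℚ) : Prop :=
  ∀ m i : ℕ, i ≤ m →
    (aeval (Sum.elim (fun j => (X (Sum.inl j) : MvPolynomial (ℕ ⊕ ℕ) ℚ))
        (fun j => if j = i then 0 else X (Sum.inr j))) (h (m + 1)) =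
      aeval (Sum.elim
        (fun j => if j < i then (X (Sum.inl j) : MvPolynomial (ℕ ⊕ ℕ) ℚ)
          else if j = i then X (Sum.inl i) + X (Sum.inl (i + 1)) else X (Sum.inl (j + 1)))
        (fun j => if j < i then X (Sum.inr j) else X (Sum.inr (j + 1)))) (h m)) ∧
    (aeval (Sum.elim (fun j => if j = i then 0 else (X (Sum.inl j) : MvPolynomial (ℕ ⊕ ℕ) ℚ))
        (fun j => X (Sum.inr j))) (h (m + 1)) =
      aeval (Sum.elim
        (fun j => if j < i then (X (Sum.inl j) : MvPolynomial (ℕ ⊕ ℕ) ℚ)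
          else X (Sum.inl (j + 1)))
        (fun j => if j + 1 < i then X (Sum.inr j)
          else if j + 1 = i then X (Sum.inr j) + X (Sum.inr (j + 1))
          else X (Sum.inr (j + 1)))) (h m))

/-- The inverse substitution of (⋆): the x-variable of (0-indexed) Lean index `k`
(paper `x_{k+1}`) expressed in the `p`/`q` variables:
`x_{2i+1} = q_{i+1}+⋯+q_m+p_{i+1}+⋯+p_{m+1}` and `x_{2i} = q_i+⋯+q_m+p_{i+1}+⋯+p_{m+1}`. -/
def xToPQ (m k : ℕ) : MvPolynomial (ℕ ⊕ ℕ) ℚ :=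
  if k % 2 = 0 then
    (∑ j ∈ Finset.Ico (k / 2) m, X (Sum.inr j)) + ∑ j ∈ Finset.Ico (k / 2) (m + 1), X (Sum.inl j)
  else
    (∑ j ∈ Finset.Ico (k / 2) m, X (Sum.inr j)) +
      ∑ j ∈ Finset.Ico (k / 2 + 1) (m + 1), X (Sum.inl j)

/-- The substitution (⋆): `p_i := x_{2i-1} - x_{2i}` (`1 ≤ i ≤ m`),
`q_i := x_{2i} - x_{2i+1}` (`1 ≤ i ≤ m`), `p_{m+1} := x_{2m+1}` (all 0-indexed in Lean). -/
def pqToX (m : ℕ) : ℕ ⊕ ℕ → MvPolynomial ℕ ℚ :=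
  Sum.elim (fun j => if j = m then X (2 * m) else X (2 * j) - X (2 * j + 1))
    (fun j => X (2 * j + 1) - X (2 * j + 2))

/-- The substitution sending every odd-indexed (paper) variable `x_{2i+1}` to `0`
and `x_{2i}` to `y_i` (Lean variable `i-1`). -/
def oddZero : ℕ → MvPolynomial ℕ ℚ := fun k => if k % 2 = 0 then 0 else X (k / 2)

/-- A quasi-symmetric stable family `(g_m)_{m≥0}` with `g m ∈ ℚ[y₁,…,y_m]`
(variable `k` is `y_{k+1}`): `g_{m+1}(y₁,…,y_m,0) = g_m`, and the coefficient of
`y_{a₁}^{c₁}⋯y_{a_r}^{c_r}` (for `a₁ < ⋯ < a_r ≤ m`, `c_j > 0`) equals the coefficient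
of `y₁^{c₁}⋯y_r^{c_r}`. -/
def IsQSymStable (g : ℕ → MvPolynomial ℕ ℚ) : Prop :=
  (∀ m, (g m).vars ⊆ Finset.range m) ∧
  (∀ m, aeval (fun k => if k = m then 0 else (X k : MvPolynomial ℕ ℚ)) (g (m + 1)) = g m) ∧
  ∀ (m r : ℕ) (a c : Fin r → ℕ), StrictMono a → (∀ j, a j < m) → (∀ j, 0 < c j) →
    coeff (∑ j, Finsupp.single (a j) (c j)) (g m) =
    coeff (∑ j : Fin r, Finsupp.single (j : ℕ) (c j)) (g m)

/-!
Write `C(d)` for the coefficient of the monomial `x^d` in `f_{2m+1}` for `m` large; stability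
makes it independent of `m`.  Equation (E_x) gives two relations between these numbers:
inserting a pair of zero exponents at two consecutive positions does not change `C`, and for
`D > 0` the values `C(⋯ x_i^s x_{i+1}^{D-s} ⋯)`, `0 ≤ s ≤ D`, sum to zero.  The second
relation moves exponent from the odd variables `x₁, x₃, …` to the even ones, the first closes
gaps, so every `C(d)` is determined by the coefficients of `x₂^{c₁} x₄^{c₂} ⋯ x_{2r}^{c_r}`
with `(c₁, …, c_r)` a composition of `n`, and the linear map sending a family to these
`2^{n-1}` numbers is injective on the space in question.
-/

open Finsupp Filter

namespace MvPolynomial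

variable {σ τ R : Type*} [CommSemiring R]

theorem aeval_X_ite_monomial (p : σ → Prop) [DecidablePred p] (u : σ →₀ ℕ) (r : R) :
    aeval (fun k => if p k then X k else 0) (monomial u r) =
      if ∀ k ∈ u.support, p k then monomial u r else 0 := by
  rw [aeval_monomial]
  split_ifs with hu
  · rw [Finsupp.prod_congr fun k hk => by rw [if_pos (hu k hk)], algebraMap_eq, ← monomial_eq]
  · push Not at hu
    obtain ⟨k, hk, hpk⟩ := hu
    rw [Finsupp.prod, Finset.prod_eq_zero hk (by simp [hpk, Finsupp.mem_support_iff.1 hk]),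
      mul_zero]

theorem coeff_aeval_X_ite (p : σ → Prop) [DecidablePred p] (P : MvPolynomial σ R)
    (d : σ →₀ ℕ) :
    coeff d (aeval (fun k => if p k then X k else 0) P) =
      if ∀ k ∈ d.support, p k then coeff d P else 0 := by
  induction P using MvPolynomial.induction_on' with
  | monomial u r =>
    rw [aeval_X_ite_monomial]
    obtain rfl | hud := eq_or_ne u d
    · split_ifs <;> simp
    · split_ifs <;> simp [coeff_monomial, hud]
  | add P Q hP hQ => simp only [map_add, coeff_add, hP, hQ]; split_ifs <;> simp

theorem coeff_rename_eq_sum (g : σ → τ) (P : MvPolynomial σ R) (μ : τ →₀ ℕ)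
    (T : Finset (σ →₀ ℕ)) (hT : ∀ d, mapDomain g d = μ ↔ d ∈ T) :
    coeff μ (rename g P) = ∑ d ∈ T, coeff d P := by
  induction P using MvPolynomial.induction_on' with
  | monomial u r =>
    simp only [rename_monomial, coeff_monomial, hT, Finset.sum_ite_eq]
  | add P Q hP hQ => simp only [map_add, coeff_add, hP, hQ, Finset.sum_add_distrib]

end MvPolynomial

theorem Submodule.exists_finset_card_le_finrank_span_eq {K V : Type*} [DivisionRing K]
    [AddCommGroup V] [Module K V] (W : Submodule K V) [FiniteDimensional K W] :
    ∃ s : Finset V, s.card ≤ Module.finrank K W ∧ Submodule.span K s = W := by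
  classical
  let b := Module.finBasis K W
  refine ⟨Finset.univ.image (W.subtype ∘ b), Finset.card_image_le.trans (by simp), ?_⟩
  rw [Finset.coe_image, Finset.coe_univ, Set.image_univ, Set.range_comp, Submodule.span_image,
    b.span_eq, Submodule.map_top, Submodule.range_subtype]

def insertPair (i k : ℕ) : ℕ := if k < i then k else k + 2

def mergePair (i k : ℕ) : ℕ := if k = i + 1 then i else k

theorem insertPair_injective (i : ℕ) : Function.Injective (insertPair i) := by
  intro a b h
  unfold insertPair at h
  split_ifs at h <;> omega

theorem mem_range_insertPair {i k : ℕ} :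
    k ∈ Set.range (insertPair i) ↔ k ≠ i ∧ k ≠ i + 1 := by
  constructor
  · rintro ⟨k, rfl⟩
    unfold insertPair
    split_ifs <;> omega
  · rintro ⟨hi, hi1⟩
    refine ⟨if k < i then k else k - 2, ?_⟩
    unfold insertPair
    split_ifs <;> omega

theorem mapDomain_insertPair_apply_self (i : ℕ) (c : ℕ →₀ ℕ) :
    mapDomain (insertPair i) c i = 0 :=
  mapDomain_of_notMem_range _ _ fun h => (mem_range_insertPair.1 h).1 rfl

theorem mapDomain_insertPair_apply_succ (i : ℕ) (c : ℕ →₀ ℕ) :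
    mapDomain (insertPair i) c (i + 1) = 0 :=
  mapDomain_of_notMem_range _ _ fun h => (mem_range_insertPair.1 h).2 rfl

theorem mapDomain_mergePair_apply (i : ℕ) (d : ℕ →₀ ℕ) (k : ℕ) :
    mapDomain (mergePair i) d k =
      if k = i then d i + d (i + 1) else if k = i + 1 then 0 else d k := by
  conv_lhs => rw [← erase_add_single (i + 1) d]
  rw [mapDomain_add, mapDomain_single, Finsupp.add_apply, single_apply]
  have : mapDomain (mergePair i) (d.erase (i + 1)) = d.erase (i + 1) := by
    conv_rhs => rw [← mapDomain_id (v := d.erase (i + 1))]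
    refine mapDomain_congr fun k hk => ?_
    have : k ≠ i + 1 := by rintro rfl; simp at hk
    simp [mergePair, this]
  rw [this, show mergePair i (i + 1) = i from if_pos rfl]
  obtain rfl | hki := eq_or_ne k i
  · simp
  obtain rfl | hki1 := eq_or_ne k (i + 1)
  · simp
  simp [hki, hki1, Ne.symm hki]

section Fibers

variable {i : ℕ} {u : ℕ →₀ ℕ}

theorem mapDomain_mergePair_eq_iff (hi : u i = 0) (hi1 : u (i + 1) = 0) (D : ℕ)
    (d : ℕ →₀ ℕ) :
    mapDomain (mergePair i) d = u + single i D ↔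
      ∃ s ≤ D, u + single i s + single (i + 1) (D - s) = d := by
  constructor
  · intro h
    have h0 := DFunLike.congr_fun h i
    simp only [mapDomain_mergePair_apply, Finsupp.add_apply, single_apply, if_pos, hi] at h0
    refine ⟨d i, by omega, Finsupp.ext fun k => ?_⟩
    have hk := DFunLike.congr_fun h k
    obtain rfl | hki := eq_or_ne k i
    · simp [hi]
    obtain rfl | hki1 := eq_or_ne k (i + 1)
    · simp [hi1]; omega
    simpa [mapDomain_mergePair_apply, hki, hki1, single_apply, Ne.symm hki] using hk.symm
  · rintro ⟨s, hs, rfl⟩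
    ext k
    obtain rfl | hki := eq_or_ne k i
    · simp [mapDomain_mergePair_apply, hi, hi1]; omega
    obtain rfl | hki1 := eq_or_ne k (i + 1)
    · simp [mapDomain_mergePair_apply, hi1]
    simp [mapDomain_mergePair_apply, hki, hki1]

theorem coeff_rename_mergePair {R : Type*} [CommSemiring R] (hi : u i = 0) (hi1 : u (i + 1) = 0)
    (D : ℕ) (P : MvPolynomial ℕ R) :
    coeff (u + single i D) (rename (mergePair i) P) =
      ∑ s ∈ Finset.range (D + 1), coeff (u + single i s + single (i + 1) (D - s)) P := by
  set split : ℕ → (ℕ →₀ ℕ) := fun s => u + single i s + single (i + 1) (D - s)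
  have hinj : Set.InjOn split ↑(Finset.range (D + 1)) := fun s _ t _ hst => by
    simpa [split, hi] using DFunLike.congr_fun hst i
  rw [coeff_rename_eq_sum _ _ _ ((Finset.range (D + 1)).image split) fun d => by
      simp only [mapDomain_mergePair_eq_iff hi hi1, Finset.mem_image, Finset.mem_range,
        Nat.lt_succ_iff, split],
    Finset.sum_image hinj]

end Fibers

def stableCoeff (f : ℕ → MvPolynomial ℕ ℚ) (d : ℕ →₀ ℕ) : ℚ :=
  coeff d (f (d.support.sup id))

namespace IsStableX

variable {f : ℕ → MvPolynomial ℕ ℚ} (hst : IsStableX f)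
include hst

theorem coeff_eq_coeff_succ {m : ℕ} {d : ℕ →₀ ℕ} (hd : ∀ k ∈ d.support, k < 2 * m + 1) :
    coeff d (f m) = coeff d (f (m + 1)) := by
  rw [← hst.2 m, coeff_aeval_X_ite, if_pos hd]

theorem coeff_eq_zero_of_not_lt {m : ℕ} {d : ℕ →₀ ℕ} {k : ℕ} (hk : k ∈ d.support)
    (hkm : ¬k < 2 * m + 1) : coeff d (f m) = 0 := by
  rw [← hst.2 m, coeff_aeval_X_ite, if_neg fun hd => hkm (hd k hk)]

theorem coeff_eq_of_le {m m' : ℕ} (hm : m ≤ m') {d : ℕ →₀ ℕ}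
    (hd : ∀ k ∈ d.support, k < 2 * m + 1) : coeff d (f m) = coeff d (f m') := by
  induction m', hm using Nat.le_induction with
  | base => rfl
  | succ m' hm ih => rw [ih, hst.coeff_eq_coeff_succ fun k hk => by linarith [hd k hk]]

theorem coeff_eq_stableCoeff {m : ℕ} {d : ℕ →₀ ℕ} (hd : ∀ k ∈ d.support, k < 2 * m + 1) :
    coeff d (f m) = stableCoeff f d := by
  have hsup : ∀ k ∈ d.support, k < 2 * d.support.sup id + 1 := fun k hk => by
    have : k ≤ d.support.sup id := Finset.le_sup (f := id) hk
    omega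
  rcases le_total m (d.support.sup id) with hm | hm
  · exact hst.coeff_eq_of_le hm hd
  · exact (hst.coeff_eq_of_le hm hsup).symm

theorem eventually_coeff_eq_stableCoeff (d : ℕ →₀ ℕ) :
    ∀ᶠ m in atTop, coeff d (f m) = stableCoeff f d := by
  filter_upwards [eventually_ge_atTop (d.support.sup id)] with m hm
  exact hst.coeff_eq_stableCoeff fun k hk => by
    have : k ≤ d.support.sup id := Finset.le_sup (f := id) hk
    omega

theorem eq_zero_of_stableCoeff_eq_zero (h : ∀ d, stableCoeff f d = 0) (m : ℕ) : f m = 0 := by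
  ext d
  by_cases hd : ∀ k ∈ d.support, k < 2 * m + 1
  · rw [hst.coeff_eq_stableCoeff hd, h, coeff_zero]
  · push Not at hd
    obtain ⟨k, hk, hkm⟩ := hd
    rw [hst.coeff_eq_zero_of_not_lt hk (by omega), coeff_zero]

end IsStableX

theorem SatisfiesEx.rename_mergePair {f : ℕ → MvPolynomial ℕ ℚ} (hEx : SatisfiesEx f)
    {m i : ℕ} (hi : i < 2 * m + 2) :
    rename (mergePair i) (f (m + 1)) = rename (insertPair i) (f m) := by
  convert hEx m i hi using 2 <;>
    · ext1 k
      simp only [rename_X, aeval_X, mergePair, insertPair, apply_ite X]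

section Relations

variable {f : ℕ → MvPolynomial ℕ ℚ} (hst : IsStableX f) (hEx : SatisfiesEx f)
  {i : ℕ} {u : ℕ →₀ ℕ}
include hst hEx

theorem eventually_sum_stableCoeff_split (hi : u i = 0) (hi1 : u (i + 1) = 0) (D : ℕ) :
    ∀ᶠ m in atTop,
      ∑ s ∈ Finset.range (D + 1), stableCoeff f (u + single i s + single (i + 1) (D - s)) =
        coeff (u + single i D) (rename (insertPair i) (f m)) := by
  have hstable : ∀ᶠ m in atTop, ∀ s ∈ Finset.range (D + 1),
      coeff (u + single i s + single (i + 1) (D - s)) (f (m + 1)) =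
        stableCoeff f (u + single i s + single (i + 1) (D - s)) :=
    (eventually_all_finset _).2 fun s _ =>
      (tendsto_add_atTop_nat 1).eventually (hst.eventually_coeff_eq_stableCoeff _)
  filter_upwards [hstable, eventually_ge_atTop i] with m hm hmi
  rw [← hEx.rename_mergePair (by omega), coeff_rename_mergePair hi hi1, Finset.sum_congr rfl hm]

theorem stableCoeff_mapDomain_insertPair (i : ℕ) (c : ℕ →₀ ℕ) :
    stableCoeff f (mapDomain (insertPair i) c) = stableCoeff f c := by
  obtain ⟨m, hsplit, hc⟩ := ((eventually_sum_stableCoeff_split hst hEx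
    (mapDomain_insertPair_apply_self i c) (mapDomain_insertPair_apply_succ i c) 0).and
    (hst.eventually_coeff_eq_stableCoeff c)).exists
  simpa [coeff_rename_mapDomain _ (insertPair_injective i), hc] using hsplit

theorem sum_stableCoeff_split_eq_zero (hi : u i = 0) (hi1 : u (i + 1) = 0) {D : ℕ}
    (hD : 0 < D) :
    ∑ s ∈ Finset.range (D + 1), stableCoeff f (u + single i s + single (i + 1) (D - s)) = 0 := by
  obtain ⟨m, hm⟩ := (eventually_sum_stableCoeff_split hst hEx hi hi1 D).exists
  refine hm.trans (coeff_rename_eq_zero _ _ _ fun e he => ?_)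
  have := DFunLike.congr_fun he i
  simp [mapDomain_insertPair_apply_self, hi] at this
  omega

end Relations

/-- Degree in the variables of even zero-based index, i.e. in the paper's `x₁, x₃, x₅, …`. -/
def evenDegree : (ℕ →₀ ℕ) →+ ℕ := weight fun k => if Even k then 1 else 0

theorem evenDegree_single (k e : ℕ) : evenDegree (single k e) = if Even k then e else 0 := by
  simp [evenDegree, weight_single]

theorem evenDegree_mapDomain_insertPair (i : ℕ) (c : ℕ →₀ ℕ) :
    evenDegree (mapDomain (insertPair i) c) = evenDegree c := by
  induction c using Finsupp.induction_linear with
  | zero => simp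
  | add a b ha hb => rw [mapDomain_add, map_add, map_add, ha, hb]
  | single k e =>
    have : Even (insertPair i k) ↔ Even k := by
      unfold insertPair; split_ifs <;> simp [Nat.even_add]
    simp only [mapDomain_single, evenDegree_single, this]

theorem evenDegree_eq_zero_iff {d : ℕ →₀ ℕ} : evenDegree d = 0 ↔ ∀ k ∈ d.support, Odd k := by
  rw [evenDegree, weight_apply, Finsupp.sum, Finset.sum_eq_zero_iff]
  refine forall₂_congr fun k hk => ?_
  simp [Finsupp.mem_support_iff.1 hk, Nat.not_even_iff_odd]

theorem exists_mapDomain_insertPair_eq_add_single (d : ℕ →₀ ℕ) {i : ℕ} (hi : Even i) :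
    ∃ u : ℕ →₀ ℕ, u i = 0 ∧ u (i + 1) = 0 ∧
      mapDomain (insertPair (i + 1)) d = u + single i (d i) ∧
      evenDegree d = evenDegree u + d i := by
  have hfix : insertPair (i + 1) i = i := if_pos (Nat.lt_succ_self i)
  refine ⟨mapDomain (insertPair (i + 1)) (d.erase i), ?_, mapDomain_insertPair_apply_self _ _,
    ?_, ?_⟩
  · simpa [hfix] using mapDomain_apply (insertPair_injective (i + 1)) (d.erase i) i
  · conv_lhs => rw [← erase_add_single i d]
    rw [mapDomain_add, mapDomain_single, hfix]
  · conv_lhs => rw [← erase_add_single i d]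
    rw [map_add, evenDegree_single, if_pos hi, evenDegree_mapDomain_insertPair]

/-- The exponent of `x₂^{c₁} x₄^{c₂} ⋯ x_{2r}^{c_r}` in the paper's numbering. -/
def compositionExponent {n : ℕ} (c : Composition n) : ℕ →₀ ℕ :=
  ∑ j ∈ Finset.range c.length, single (2 * j + 1) (c.blocks.getD j 0)

theorem exists_compositionExponent_eq {d : ℕ →₀ ℕ} {r n : ℕ}
    (hd : d.support = (Finset.range r).image fun j => 2 * j + 1) (hn : d.degree = n) :
    ∃ c : Composition n, compositionExponent c = d := by
  subst hn
  have hinj : Set.InjOn (fun j => 2 * j + 1) ↑(Finset.range r) := fun a _ b _ h => by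
    simp only at h; omega
  have hpos : ∀ j < r, 0 < d (2 * j + 1) := fun j hj => by
    have : 2 * j + 1 ∈ d.support := hd ▸ Finset.mem_image_of_mem _ (Finset.mem_range.2 hj)
    exact Nat.pos_of_ne_zero (Finsupp.mem_support_iff.1 this)
  refine ⟨⟨(List.range r).map fun j => d (2 * j + 1), ?_, ?_⟩, ?_⟩
  · simpa using hpos
  · change ∑ j ∈ Finset.range r, d (2 * j + 1) = d.degree
    rw [degree_apply, hd, Finset.sum_image hinj]
  · calc compositionExponent _ = ∑ j ∈ Finset.range r, single (2 * j + 1) (d (2 * j + 1)) := by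
          refine Finset.sum_congr (by simp [Composition.length]) fun j hj => ?_
          simp_all
      _ = ∑ k ∈ d.support, single k (d k) := by rw [hd, Finset.sum_image hinj]
      _ = d := d.sum_single

theorem support_eq_image_or_exists_gap {d : ℕ →₀ ℕ} (hodd : ∀ k ∈ d.support, Odd k) :
    (∃ r, d.support = (Finset.range r).image fun j => 2 * j + 1) ∨
      ∃ j, d (2 * j) = 0 ∧ d (2 * j + 1) = 0 ∧ ∃ k ∈ d.support, 2 * j + 1 < k := by
  by_cases hgap : ∃ j, d (2 * j + 1) = 0 ∧ ∃ k ∈ d.support, 2 * j + 1 < k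
  · obtain ⟨j, hj, hk⟩ := hgap
    refine .inr ⟨j, ?_, hj, hk⟩
    by_contra h
    exact Nat.not_odd_iff_even.2 (even_two_mul j) (hodd _ (Finsupp.mem_support_iff.2 h))
  push Not at hgap
  refine .inl ⟨(d.support.sup id + 1) / 2, Finset.ext fun k => ?_⟩
  simp only [Finset.mem_image, Finset.mem_range]
  constructor
  · intro hk
    obtain ⟨j, rfl⟩ := hodd k hk
    have : 2 * j + 1 ≤ d.support.sup id := Finset.le_sup (f := id) hk
    exact ⟨j, by omega, rfl⟩
  · rintro ⟨j, hj, rfl⟩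
    have hne : d.support.Nonempty := by
      by_contra h
      simp [Finset.not_nonempty_iff_eq_empty.1 h] at hj
    obtain ⟨M, hM, hMsup⟩ := Finset.exists_mem_eq_sup d.support hne id
    rcases (show 2 * j + 1 ≤ M by simp only [id] at hMsup; omega).eq_or_lt with h | h
    · exact h ▸ hM
    · exact Finsupp.mem_support_iff.2 fun h0 => by have := hgap j h0 M hM; omega

theorem exists_mapDomain_insertPair_eq {d : ℕ →₀ ℕ} {i k : ℕ} (h0 : d i = 0)
    (h1 : d (i + 1) = 0) (hk : k ∈ d.support) (hik : i + 1 < k) :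
    ∃ c, mapDomain (insertPair i) c = d ∧ c.support.sup id < d.support.sup id := by
  have hksup : k ≤ d.support.sup id := Finset.le_sup (f := id) hk
  refine ⟨comapDomain (insertPair i) d (insertPair_injective i).injOn,
    mapDomain_comapDomain _ (insertPair_injective i) d fun a ha => ?_, ?_⟩
  · refine mem_range_insertPair.2 ⟨?_, ?_⟩ <;> rintro rfl <;> simp_all
  · refine (Finset.sup_lt_iff (by rw [Nat.bot_eq_zero]; omega)).2 fun a ha => ?_
    rw [Finsupp.mem_support_iff, comapDomain_apply, ← Finsupp.mem_support_iff] at ha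
    have : insertPair i a ≤ d.support.sup id := Finset.le_sup (f := id) ha
    unfold insertPair at this
    split_ifs at this <;> simp only [id] <;> omega

section Vanishing

variable {n : ℕ} {f : ℕ → MvPolynomial ℕ ℚ} (hst : IsStableX f) (hEx : SatisfiesEx f)
  (hhom : ∀ m, (f m).IsHomogeneous n)
  (hcomp : ∀ c : Composition n, stableCoeff f (compositionExponent c) = 0)
include hst hEx hhom hcomp

theorem stableCoeff_eq_zero_of_evenDegree_eq_zero {d : ℕ →₀ ℕ} (hd : evenDegree d = 0) :
    stableCoeff f d = 0 := by
  induction hM : d.support.sup id using Nat.strong_induction_on generalizing d with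
  | _ M ih =>
  rcases support_eq_image_or_exists_gap (evenDegree_eq_zero_iff.1 hd) with
    ⟨r, hr⟩ | ⟨j, h0, h1, k, hk, hjk⟩
  · by_cases hdeg : d.degree = n
    · obtain ⟨c, rfl⟩ := exists_compositionExponent_eq hr hdeg
      exact hcomp c
    · exact (hhom _).coeff_eq_zero hdeg
  · obtain ⟨c, rfl, hc⟩ := exists_mapDomain_insertPair_eq h0 h1 hk hjk
    rw [stableCoeff_mapDomain_insertPair hst hEx]
    exact ih _ (hM ▸ hc) (by rwa [evenDegree_mapDomain_insertPair] at hd) rfl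

theorem stableCoeff_eq_zero (d : ℕ →₀ ℕ) : stableCoeff f d = 0 := by
  induction hw : evenDegree d using Nat.strong_induction_on generalizing d with
  | _ w ih =>
  obtain rfl | hw0 := eq_or_ne w 0
  · exact stableCoeff_eq_zero_of_evenDegree_eq_zero hst hEx hhom hcomp hw
  obtain ⟨i, hi, heven⟩ : ∃ i ∈ d.support, Even i := by
    by_contra! h
    exact hw0 (hw ▸ evenDegree_eq_zero_iff.2 fun k hk => Nat.not_even_iff_odd.1 (h k hk))
  -- Open a zero pair right after `i` and split the exponent of `x_i` over that pair: all the
  -- other terms of the split relation have smaller `evenDegree`.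
  obtain ⟨u, hui, hui1, hdu, hdeg⟩ := exists_mapDomain_insertPair_eq_add_single d heven
  have hsplit := sum_stableCoeff_split_eq_zero hst hEx hui hui1
    (Nat.pos_of_ne_zero (Finsupp.mem_support_iff.1 hi))
  rw [Finset.sum_range_succ, Nat.sub_self, single_zero, add_zero, ← hdu,
    stableCoeff_mapDomain_insertPair hst hEx, Finset.sum_eq_zero, zero_add] at hsplit
  · exact hsplit
  intro s hs
  refine ih (evenDegree u + s) (by simp at hs; omega) _ ?_
  rw [map_add, map_add, evenDegree_single, evenDegree_single, if_pos heven,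
    if_neg (Nat.not_even_iff_odd.2 heven.add_one), add_zero]

end Vanishing

def stableXSubmodule (n : ℕ) : Submodule ℚ (ℕ → MvPolynomial ℕ ℚ) where
  carrier := {f | IsStableX f ∧ SatisfiesEx f ∧ ∀ m, (f m).IsHomogeneous n}
  add_mem' := by
    rintro f g ⟨⟨hfv, hfs⟩, hfe, hfh⟩ ⟨⟨hgv, hgs⟩, hge, hgh⟩
    refine ⟨⟨fun m => (vars_add_subset _ _).trans (Finset.union_subset (hfv m) (hgv m)),
      fun m => ?_⟩, fun m i hi => ?_, fun m => (hfh m).add (hgh m)⟩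
    · simp only [Pi.add_apply, map_add, hfs m, hgs m]
    · simp only [Pi.add_apply, map_add, hfe m i hi, hge m i hi]
  zero_mem' := by
    refine ⟨⟨fun m => ?_, fun m => ?_⟩, fun m i hi => ?_, fun m => isHomogeneous_zero _ _ _⟩ <;>
      simp
  smul_mem' := by
    rintro c f ⟨⟨hfv, hfs⟩, hfe, hfh⟩
    refine ⟨⟨fun m => ?_, fun m => ?_⟩, fun m i hi => ?_, fun m => ?_⟩
    · rw [Pi.smul_apply, smul_eq_C_mul]
      exact (vars_mul _ _).trans (by simpa using hfv m)
    · simp only [Pi.smul_apply, map_smul, hfs m]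
    · simp only [Pi.smul_apply, map_smul, hfe m i hi]
    · rw [Pi.smul_apply, smul_eq_C_mul]
      simpa using (isHomogeneous_C ℕ c).mul (hfh m)

def compositionCoeffs (n : ℕ) : (ℕ → MvPolynomial ℕ ℚ) →ₗ[ℚ] (Composition n → ℚ) where
  toFun f c := stableCoeff f (compositionExponent c)
  map_add' f g := by ext c; simp [stableCoeff]
  map_smul' a f := by ext c; simp [stableCoeff]

theorem injective_compositionCoeffs_domRestrict (n : ℕ) :
    Function.Injective ((compositionCoeffs n).domRestrict (stableXSubmodule n)) := by
  rw [injective_iff_map_eq_zero]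
  rintro ⟨f, hst, hEx, hhom⟩ h
  ext1
  funext m
  exact hst.eq_zero_of_stableCoeff_eq_zero (stableCoeff_eq_zero hst hEx hhom (congrFun h)) m

instance (n : ℕ) : FiniteDimensional ℚ (stableXSubmodule n) :=
  Module.Finite.of_injective _ (injective_compositionCoeffs_domRestrict n)

theorem finrank_stableXSubmodule_le (n : ℕ) :
    Module.finrank ℚ (stableXSubmodule n) ≤ 2 ^ (n - 1) := by
  simpa [composition_card] using
    LinearMap.finrank_le_finrank_of_injective (injective_compositionCoeffs_domRestrict n)

theorem stmt8_general (n : ℕ) :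
    ∃ s : Finset (ℕ → MvPolynomial ℕ ℚ), s.card ≤ 2 ^ (n - 1) ∧
      ∀ f : ℕ → MvPolynomial ℕ ℚ, IsStableX f → SatisfiesEx f →
        (∀ m, (f m).IsHomogeneous n) →
        f ∈ Submodule.span ℚ (s : Set (ℕ → MvPolynomial ℕ ℚ)) := by
  obtain ⟨s, hcard, hspan⟩ := (stableXSubmodule n).exists_finset_card_le_finrank_span_eq
  exact ⟨s, hcard.trans (finrank_stableXSubmodule_le n),
    fun f hst hEx hhom => hspan ▸ ⟨hst, hEx, hhom⟩⟩

/-- For every `n ≥ 1`, the space of stable x-families satisfying (E_x)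
whose members are homogeneous of degree `n` has dimension at most `2^(n-1)`: there is a
spanning set of cardinality at most `2^(n-1)`. -/
theorem stmt8 (n : ℕ) (hn : 1 ≤ n) :
    ∃ s : Finset (ℕ → MvPolynomial ℕ ℚ), s.card ≤ 2 ^ (n - 1) ∧
      ∀ f : ℕ → MvPolynomial ℕ ℚ, IsStableX f → SatisfiesEx f →
        (∀ m, (f m).IsHomogeneous n) →
        f ∈ Submodule.span ℚ (s : Set (ℕ → MvPolynomial ℕ ℚ)) :=
  stmt8_general n
end
end

section
/- Let f = (f_{2m+1})_{m≥0} and f′ = (f′_{2m+1})_{m≥0} be two stable x-families satisfying equation (E_x). If for every m ≥ 0 one has f_{2m+1}(0,y₁,0,y₂,0,…,0,y_m,0) = f′_{2m+1}(0,y₁,0,y₂,0,…,0,y_m,0) (all odd-indexed variables set to 0), then f_{2m+1} = f′_{2m+1} for all m ≥ 0. -/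
open MvPolynomial
open scoped Classical

noncomputable section

/-!
Put `g = f - f'`, a family satisfying (E_x) whose coefficients vanish on monomials in the
even-indexed variables alone. We show by induction on the degree in the odd-indexed variables
that every coefficient of every `g_{2m+1}` vanishes. Let `x_p`, `p` odd, occur in `x^D`.
(E_x) at position `p + 1`, where the two merged variables are fresh, shows that inserting two
fresh variables right after `x_p` turns `x^D` into a monomial of `g_{2m+3}` with the same
coefficient. (E_x) at position `p`, whose right-hand side does not involve `x_p`, says that the
coefficients of the monomials obtained from this one by moving `t` units of exponent from `x_p`
to the fresh `x_{p+1}` sum to zero over `0 ≤ t ≤ D_p`; the terms with `t ≥ 1` have smaller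
degree in the odd-indexed variables.
-/

namespace Finsupp

variable {σ M : Type*} {a b : σ}

def transfer (D : σ →₀ ℕ) (a b : σ) (t : ℕ) : σ →₀ ℕ :=
  D - single a t + single b t

lemma transfer_apply (D : σ →₀ ℕ) (t : ℕ) (k : σ) :
    D.transfer a b t k = D k - (if a = k then t else 0) + (if b = k then t else 0) := by
  simp [transfer, single_apply]

@[simp]
lemma transfer_zero (D : σ →₀ ℕ) : D.transfer a b 0 = D := by
  simp [transfer]

lemma mapDomain_update_id_apply [DecidableEq σ] [AddCommMonoid M] (hab : a ≠ b) (u : σ →₀ M)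
    (k : σ) :
    u.mapDomain (Function.update id b a) k =
      if k = a then u a + u b else if k = b then 0 else u k := by
  conv_lhs => rw [← erase_add_single b u]
  rw [mapDomain_add, mapDomain_single, Function.update_self,
    mapDomain_congr (g := id) fun x hx =>
      Function.update_of_ne (Finset.ne_of_mem_erase (support_erase (f := u) ▸ hx)) _ _,
    mapDomain_id]
  rcases eq_or_ne k a with rfl | hka
  · simp [erase_ne hab, add_comm]
  · rcases eq_or_ne k b with rfl | hkb
    · simp [hab.symm]
    · simp [hka, hkb, erase_ne hkb]

lemma mapDomain_update_id_eq_iff [DecidableEq σ] (hab : a ≠ b) {u D : σ →₀ ℕ} (hD : D b = 0) :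
    u.mapDomain (Function.update id b a) = D ↔ u b ≤ D a ∧ u = D.transfer a b (u b) := by
  constructor
  · rintro rfl
    refine ⟨by simp [mapDomain_update_id_apply hab], ext fun k => ?_⟩
    rw [transfer_apply, mapDomain_update_id_apply hab]
    rcases eq_or_ne k a with rfl | hka
    · simp [hab.symm]
    · rcases eq_or_ne k b with rfl | hkb
      · simp [hab, hab.symm]
      · simp [hka, hkb, Ne.symm hka, Ne.symm hkb]
  · rintro ⟨hle, hu⟩
    ext k
    rw [mapDomain_update_id_apply hab, hu]
    simp only [transfer_apply]
    rcases eq_or_ne k a with rfl | hka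
    · simp [hab, hab.symm, hD]
      omega
    · rcases eq_or_ne k b with rfl | hkb
      · simp [hab.symm, hD]
      · simp [hka, hkb, Ne.symm hka, Ne.symm hkb]

end Finsupp

namespace MvPolynomial

variable {R σ : Type*} [CommSemiring R] [DecidableEq σ] {a b : σ}

theorem coeff_rename_update_id (hab : a ≠ b) (P : MvPolynomial σ R) {D : σ →₀ ℕ}
    (hD : D b = 0) :
    coeff D (rename (Function.update id b a) P) =
      ∑ t ∈ Finset.range (D a + 1), coeff (D.transfer a b t) P := by
  induction P using MvPolynomial.induction_on' with
  | monomial u c =>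
    have transfer_self (t : ℕ) : D.transfer a b t b = t := by
      simp [Finsupp.transfer_apply, hab, hD]
    simp only [rename_monomial, coeff_monomial, Finsupp.mapDomain_update_id_eq_iff hab hD]
    split_ifs with h
    · rw [Finset.sum_eq_single_of_mem (u b) (by simpa [Nat.lt_succ_iff] using h.1), if_pos h.2]
      rintro t - htu
      rw [if_neg]
      rintro rfl
      exact htu (transfer_self t).symm
    · refine (Finset.sum_eq_zero fun t ht => if_neg ?_).symm
      rintro rfl
      rw [transfer_self] at h
      exact h ⟨by simpa [Nat.lt_succ_iff] using ht, rfl⟩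
  | add p q hp hq => simp only [map_add, coeff_add, hp, hq, Finset.sum_add_distrib]

theorem coeff_rename_update_id_of_eq_zero (hab : a ≠ b) (P : MvPolynomial σ R) {D : σ →₀ ℕ}
    (ha : D a = 0) (hb : D b = 0) :
    coeff D (rename (Function.update id b a) P) = coeff D P := by
  rw [coeff_rename_update_id hab P hb, ha, zero_add, Finset.sum_range_one,
    Finsupp.transfer_zero]

end MvPolynomial

def skipTwo (i : ℕ) : ℕ → ℕ := fun k => if k < i then k else k + 2

lemma skipTwo_injective (i : ℕ) : Function.Injective (skipTwo i) := by
  intro k l h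
  simp only [skipTwo] at h
  split_ifs at h <;> omega

lemma skipTwo_ne (i k : ℕ) : skipTwo i k ≠ i ∧ skipTwo i k ≠ i + 1 := by
  unfold skipTwo
  split_ifs <;> omega

lemma even_skipTwo_iff (i k : ℕ) : Even (skipTwo i k) ↔ Even k := by
  unfold skipTwo
  split_ifs
  · rfl
  · simp [Nat.even_add]

lemma mapDomain_skipTwo_apply_of_lt {i k : ℕ} (hk : k < i) (D : ℕ →₀ ℕ) :
    D.mapDomain (skipTwo i) k = D k := by
  have h := Finsupp.mapDomain_apply (skipTwo_injective i) D k
  rwa [show skipTwo i k = k from if_pos hk] at h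

lemma mapDomain_skipTwo_apply_self (i : ℕ) (D : ℕ →₀ ℕ) :
    D.mapDomain (skipTwo i) i = 0 ∧ D.mapDomain (skipTwo i) (i + 1) = 0 :=
  ⟨Finsupp.mapDomain_of_notMem_range _ _ fun ⟨k, hk⟩ => (skipTwo_ne i k).1 hk,
    Finsupp.mapDomain_of_notMem_range _ _ fun ⟨k, hk⟩ => (skipTwo_ne i k).2 hk⟩

/-- Lean variable `k` is the paper's `x_{k+1}`, so this weight is the degree in
`x₁, x₃, x₅, …`. -/
def evenWeight : ℕ → ℕ := fun k => if Even k then 1 else 0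

lemma weight_mapDomain_skipTwo (i : ℕ) (D : ℕ →₀ ℕ) :
    (D.mapDomain (skipTwo i)).weight evenWeight = D.weight evenWeight := by
  have : evenWeight ∘ skipTwo i = evenWeight := funext fun k => by
    simp [evenWeight, even_skipTwo_iff]
  simp only [Finsupp.weight, LinearMap.toAddMonoidHom_coe, Finsupp.linearCombination_mapDomain,
    this]

lemma weight_transfer_add {p : ℕ} (hp : Even p) {D : ℕ →₀ ℕ} {t : ℕ} (ht : t ≤ D p) :
    (D.transfer p (p + 1) t).weight evenWeight + t = D.weight evenWeight := by
  have hsplit : D.transfer p (p + 1) t + Finsupp.single p t = D + Finsupp.single (p + 1) t := by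
    ext k
    simp only [Finsupp.add_apply, Finsupp.transfer_apply, Finsupp.single_apply]
    split_ifs <;> subst_vars <;> omega
  have := congrArg (Finsupp.weight evenWeight) hsplit
  simpa [Finsupp.weight_single, evenWeight, hp, Nat.even_add_one] using this

section Vanishing

variable {R : Type*}

def SatisfiesRenameEx [CommSemiring R] (g : ℕ → MvPolynomial ℕ R) : Prop :=
  ∀ m i, i < 2 * m + 2 →
    rename (Function.update id (i + 1) i) (g (m + 1)) = rename (skipTwo i) (g m)

theorem SatisfiesEx.satisfiesRenameEx {f : ℕ → MvPolynomial ℕ ℚ} (h : SatisfiesEx f) :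
    SatisfiesRenameEx f := by
  intro m i hi
  convert h m i hi using 1 <;> rw [rename_eq_aeval] <;> congr 2 <;> funext k
  · simp [Function.update_apply, apply_ite X]
  · simp [skipTwo, apply_ite X]

theorem SatisfiesRenameEx.sub [CommRing R] {g g' : ℕ → MvPolynomial ℕ R}
    (hg : SatisfiesRenameEx g) (hg' : SatisfiesRenameEx g') :
    SatisfiesRenameEx fun m => g m - g' m := fun m i hi => by
  simp only [map_sub, hg m i hi, hg' m i hi]

namespace SatisfiesRenameEx

variable [CommSemiring R] {g : ℕ → MvPolynomial ℕ R}

theorem coeff_mapDomain_skipTwo_succ (hE : SatisfiesRenameEx g) {m p : ℕ} (hp : p < 2 * m + 1)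
    (D : ℕ →₀ ℕ) : coeff (D.mapDomain (skipTwo (p + 1))) (g (m + 1)) = coeff D (g m) := by
  obtain ⟨h₁, h₂⟩ := mapDomain_skipTwo_apply_self (p + 1) D
  have := congrArg (coeff (D.mapDomain (skipTwo (p + 1)))) (hE m (p + 1) (by omega))
  rwa [coeff_rename_update_id_of_eq_zero (by omega) _ h₁ h₂,
    coeff_rename_mapDomain _ (skipTwo_injective _)] at this

theorem sum_coeff_transfer_eq_zero (hE : SatisfiesRenameEx g) {m p : ℕ} (hp : p < 2 * m + 2)
    {D : ℕ →₀ ℕ} (hDp : D p ≠ 0) (hD : D (p + 1) = 0) :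
    ∑ t ∈ Finset.range (D p + 1), coeff (D.transfer p (p + 1) t) (g (m + 1)) = 0 := by
  rw [← coeff_rename_update_id (by omega) _ hD, hE m p hp]
  refine coeff_rename_eq_zero _ _ _ fun u hu => absurd ?_ hDp
  rw [← hu]
  exact (mapDomain_skipTwo_apply_self p u).1

theorem eq_zero (hE : SatisfiesRenameEx g)
    (hvars : ∀ m, (g m).vars ⊆ Finset.range (2 * m + 1))
    (hodd : ∀ m (D : ℕ →₀ ℕ), (∀ k, Even k → D k = 0) → coeff D (g m) = 0) (m : ℕ) :
    g m = 0 := by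
  ext D
  rw [coeff_zero]
  induction hn : D.weight evenWeight using Nat.strong_induction_on generalizing m D with
  | _ n ih =>
  by_cases hD : ∀ k, Even k → D k = 0
  · exact hodd m D hD
  push Not at hD
  obtain ⟨p, hp, hDp⟩ := hD
  by_cases hpm : p < 2 * m + 1
  · have hD'p := mapDomain_skipTwo_apply_of_lt (show p < p + 1 by omega) D
    have hD'succ := (mapDomain_skipTwo_apply_self (p + 1) D).1
    have hweight := weight_mapDomain_skipTwo (p + 1) D
    rw [← hE.coeff_mapDomain_skipTwo_succ hpm]
    generalize D.mapDomain (skipTwo (p + 1)) = D' at hD'p hD'succ hweight ⊢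
    have hsum := hE.sum_coeff_transfer_eq_zero (m := m) (by omega) (hD'p ▸ hDp) hD'succ
    rw [Finset.sum_range_succ', Finset.sum_eq_zero, zero_add, Finsupp.transfer_zero] at hsum
    · exact hsum
    · intro t ht
      have := weight_transfer_add hp (show t + 1 ≤ D' p from Finset.mem_range.1 ht)
      exact ih _ (by omega) (m + 1) _ rfl
  · by_contra hc
    have hpvars := support_subset_vars_of_mem_support (mem_support_iff.2 hc)
      (Finsupp.mem_support_iff.2 hDp)
    exact hpm (Finset.mem_range.1 (hvars m hpvars))

end SatisfiesRenameEx

end Vanishing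

lemma two_mul_add_one_injective : Function.Injective fun j : ℕ => 2 * j + 1 :=
  fun _ _ h => by simpa using h

lemma aeval_oddZero_eq_killCompl :
    (aeval oddZero : MvPolynomial ℕ ℚ →ₐ[ℚ] MvPolynomial ℕ ℚ) =
      killCompl two_mul_add_one_injective := by
  refine algHom_ext fun k => ?_
  rw [killCompl, aeval_X, aeval_X, oddZero]
  split_ifs with heven hrange hrange
  · obtain ⟨j, rfl⟩ := hrange
    simp at heven
  · rfl
  · congr
    apply two_mul_add_one_injective
    have := Equiv.apply_ofInjective_symm two_mul_add_one_injective ⟨k, hrange⟩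
    dsimp only at this ⊢
    omega
  · exact absurd ⟨k / 2, by dsimp only; omega⟩ hrange

lemma coeff_eq_of_aeval_oddZero_eq {P Q : MvPolynomial ℕ ℚ}
    (h : aeval oddZero P = aeval oddZero Q) {D : ℕ →₀ ℕ} (hD : ∀ k, Even k → D k = 0) :
    coeff D P = coeff D Q := by
  have hsupp : ↑D.support ⊆ Set.range fun j : ℕ => 2 * j + 1 := fun k hk => by
    obtain ⟨j, rfl⟩ := Nat.not_even_iff_odd.1 fun he => Finsupp.mem_support_iff.1 hk (hD k he)
    exact ⟨j, rfl⟩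
  rw [← Finsupp.mapDomain_comapDomain _ two_mul_add_one_injective D hsupp,
    ← coeff_killCompl two_mul_add_one_injective, ← coeff_killCompl two_mul_add_one_injective,
    ← aeval_oddZero_eq_killCompl, h]

/-- Two stable x-families satisfying (E_x) which agree after setting
all odd-indexed variables to `0` are equal. -/
theorem stmt10 (f f' : ℕ → MvPolynomial ℕ ℚ)
    (hf : IsStableX f) (hf' : IsStableX f')
    (hex : SatisfiesEx f) (hex' : SatisfiesEx f')
    (heq : ∀ m, aeval oddZero (f m) = aeval oddZero (f' m)) :
    ∀ m, f m = f' m := by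
  have hvars (m : ℕ) : (f m - f' m).vars ⊆ Finset.range (2 * m + 1) :=
    (vars_sub_subset ..).trans (Finset.union_subset (hf.1 m) (hf'.1 m))
  have hodd (m : ℕ) (D : ℕ →₀ ℕ) (hD : ∀ k, Even k → D k = 0) : coeff D (f m - f' m) = 0 := by
    rw [coeff_sub, sub_eq_zero]
    exact coeff_eq_of_aeval_oddZero_eq (heq m) hD
  exact fun m => sub_eq_zero.1 <|
    (hex.satisfiesRenameEx.sub hex'.satisfiesRenameEx).eq_zero hvars hodd m
end
end

section
/- Let P be a labeled ranked poset on n elements, let m ≥ 1 and 1 ≤ i ≤ m, and let A_m denote the free ℚ-algebra on noncommuting generators b₁,…,b_{m+1},d₁,…,d_m. Then: (i) the image of 𝐍_P^(m) under the algebra endomorphism of A_m sending d_i to 0 and fixing all other generators equals the image of 𝐍_P^(m−1) under the algebra homomorphism A_{m−1} → A_m sending b_j ↦ b_j for j < i, b_i ↦ b_i + b_{i+1}, b_j ↦ b_{j+1} for i < j ≤ m, d_j ↦ d_j for j < i, and d_j ↦ d_{j+1} for i ≤ j ≤ m−1; and (ii) the image of 𝐍_P^(m) under the algebra endomorphism of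 A_m sending b_i to 0 and fixing all other generators equals the image of 𝐍_P^(m−1) under the algebra homomorphism A_{m−1} → A_m sending b_j ↦ b_j for j < i, b_j ↦ b_{j+1} for i ≤ j ≤ m, d_j ↦ d_j for j ≤ i−2, d_{i−1} ↦ d_{i−1} + d_i, and d_j ↦ d_{j+1} for i ≤ j ≤ m−1, where for i = 1 the homomorphism in (ii) sends b_j ↦ b_{j+1} for all 1 ≤ j ≤ m and d_j ↦ d_{j+1} for all 1 ≤ j ≤ m−1. -/
open scoped Classical

noncomputable section

/-- The free `ℚ`-algebra on noncommuting generators `a₁, a₂, …` (generator `j` is `a_{j+1}`). -/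
abbrev NC1 : Type := MonoidAlgebra ℚ (FreeMonoid ℕ)

/-- The free `ℚ`-algebra on two alphabets of noncommuting generators:
`Sum.inl j` is `b_{j+1}` and `Sum.inr j` is `d_{j+1}`. -/
abbrev NC2 : Type := MonoidAlgebra ℚ (FreeMonoid (ℕ ⊕ ℕ))

/-- The order condition for `r : Fin n → Fin N` with respect to a partial order `le`
and rank function `ht` on `{1,…,n}` (represented as `Fin n`). -/
def NCOrderCond {n N : ℕ} (le : Fin n → Fin n → Prop) (ht : Fin n → ℕ)
    (r : Fin n → Fin N) : Prop :=
  (∀ x y, le x y → r x ≤ r y) ∧ ∀ x y, le x y → x ≠ y → Odd (ht x) → r x < r y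

/-- `(le, ht)` is a labeled ranked poset structure on `Fin n`: `le` is a partial order,
minimal elements have height `0`, and covering relations increase the height by one. -/
def IsLRPoset {n : ℕ} (le : Fin n → Fin n → Prop) (ht : Fin n → ℕ) : Prop :=
  (∀ x, le x x) ∧ (∀ x y z, le x y → le y z → le x z) ∧
    (∀ x y, le x y → le y x → x = y) ∧
    (∀ x, (∀ y, le y x → y = x) → ht x = 0) ∧
    ∀ x y, le x y → x ≠ y → (∀ z, le x z → le z y → z = x ∨ z = y) → ht y = ht x + 1

/-- The noncommutative generating function `𝐅_P^(N)` (generator `j` is `a_{j+1}`). -/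
def ncF {n : ℕ} (le : Fin n → Fin n → Prop) (ht : Fin n → ℕ) (N : ℕ) : NC1 :=
  ∑ r : Fin n → Fin N,
    if NCOrderCond le ht r then
      MonoidAlgebra.of ℚ (FreeMonoid ℕ) (FreeMonoid.ofList (List.ofFn fun i => (r i : ℕ)))
    else 0

/-- The noncommutative generating function `𝐍_P^(m)` in the two alphabets `b`, `d`. -/
def ncN {n : ℕ} (le : Fin n → Fin n → Prop) (ht : Fin n → ℕ) (m : ℕ) : NC2 :=
  ∑ r : Fin n → Fin (m + 1),
    if NCOrderCond le ht r ∧ ∀ i, Odd (ht i) → (r i : ℕ) < m then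
      MonoidAlgebra.of ℚ (FreeMonoid (ℕ ⊕ ℕ)) (FreeMonoid.ofList (List.ofFn fun i =>
        if Even (ht i) then (Sum.inl (r i : ℕ) : ℕ ⊕ ℕ) else Sum.inr (r i : ℕ)))
    else 0

/-- The generator `a_{j+1}` of `NC1`. -/
def genA (j : ℕ) : NC1 := MonoidAlgebra.of ℚ (FreeMonoid ℕ) (FreeMonoid.of j)

/-- The generator `b_{j+1}` (for `Sum.inl j`) or `d_{j+1}` (for `Sum.inr j`) of `NC2`. -/
def bd (s : ℕ ⊕ ℕ) : NC2 := MonoidAlgebra.of ℚ (FreeMonoid (ℕ ⊕ ℕ)) (FreeMonoid.of s)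

/-- The `ℚ`-algebra homomorphism of `NC1` substituting `φ j` for the generator `a_{j+1}`. -/
def ncSubst1 (φ : ℕ → NC1) : NC1 →ₐ[ℚ] NC1 :=
  MonoidAlgebra.lift ℚ NC1 (FreeMonoid ℕ) (FreeMonoid.lift φ)

/-- The `ℚ`-algebra homomorphism of `NC2` substituting `φ s` for the generator `bd s`. -/
def ncSubst2 (φ : ℕ ⊕ ℕ → NC2) : NC2 →ₐ[ℚ] NC2 :=
  MonoidAlgebra.lift ℚ NC2 (FreeMonoid (ℕ ⊕ ℕ)) (FreeMonoid.lift φ)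

/-- A set composition `(K₀,…,K_{ℓ-1})` of `{1,…,n}`, encoded as a surjection
`Fin n → Fin ℓ` sending each element to the index of its block. -/
abbrev SetComp (n : ℕ) : Type :=
  {c : Σ ℓ : Fin (n + 1), Fin n → Fin ℓ // Function.Surjective c.2}

instance (n : ℕ) : Fintype (SetComp n) := Fintype.ofFinite _

/-- The rank function of the labeled ranked poset `P_K`: `ht i = s` for `i ∈ K_s`. -/
def SetComp.ht {n : ℕ} (K : SetComp n) (i : Fin n) : ℕ := (K.1.2 i : ℕ)

/-- The partial order of the labeled ranked poset `P_K`: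
`i ≤ j` iff `i = j` or `i` lies in an earlier block than `j`. -/
def SetComp.le {n : ℕ} (K : SetComp n) (x y : Fin n) : Prop := x = y ∨ K.1.2 x < K.1.2 y

/-- The order of the disjoint union `P ⊕ Q` on `Fin (n + n')`. -/
def sumLe {n n' : ℕ} (leP : Fin n → Fin n → Prop) (leQ : Fin n' → Fin n' → Prop)
    (x y : Fin (n + n')) : Prop :=
  (∃ (hx : (x : ℕ) < n) (hy : (y : ℕ) < n), leP ⟨x, hx⟩ ⟨y, hy⟩) ∨
  (∃ (_ : n ≤ (x : ℕ)) (_ : n ≤ (y : ℕ)),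
    leQ ⟨(x : ℕ) - n, by have := x.isLt; omega⟩ ⟨(y : ℕ) - n, by have := y.isLt; omega⟩)

/-- The rank function of the disjoint union `P ⊕ Q` on `Fin (n + n')`. -/
def sumHt {n n' : ℕ} (htP : Fin n → ℕ) (htQ : Fin n' → ℕ) (x : Fin (n + n')) : ℕ :=
  if h : (x : ℕ) < n then htP ⟨x, h⟩ else htQ ⟨(x : ℕ) - n, by have := x.isLt; omega⟩


/-!
Both sides are sums of words `c_{g(1)} ⋯ c_{g(n)}` over labellings `g` of `P`. Killing `d_i`
keeps the `m`-admissible labellings in which no odd element is labelled `i`; expanding the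
right-hand side, each `(m-1)`-admissible labelling `r` contributes the labellings `g` that
agree with `r` after merging the labels `i` and `i + 1`, again with no odd element labelled `i`.
These two families coincide: merging preserves admissibility, and conversely the only way it
could hide a violation `g x > g y` for `x < y` is `g x = i + 1`, `g y = i` with `x, y` even;
but then an odd element covering `x` below `y` would need a label strictly between them.
Part (ii) is the same argument with `b_i` killed, the labels `i - 1` and `i` merged, and the
roles of even and odd elements exchanged.
-/

namespace IsLRPoset

variable {n : ℕ} {le : Fin n → Fin n → Prop} {ht : Fin n → ℕ}

theorem wellFounded_lt (hP : IsLRPoset le ht) : WellFounded fun x y => le x y ∧ x ≠ y := by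
  obtain ⟨-, htrans, hanti, -, -⟩ := hP
  have : IsTrans (Fin n) fun x y => le x y ∧ x ≠ y :=
    ⟨fun x y z ⟨hxy, hne⟩ ⟨hyz, _⟩ =>
      ⟨htrans x y z hxy hyz, by rintro rfl; exact hne (hanti x y hxy hyz)⟩⟩
  have : Std.Irrefl fun x y : Fin n => le x y ∧ x ≠ y := ⟨fun _ h => h.2 rfl⟩
  exact Finite.wellFounded_of_trans_of_irrefl _

theorem exists_ht_succ_between (hP : IsLRPoset le ht) {x y : Fin n} (hxy : le x y)
    (hne : x ≠ y) : ∃ z, le x z ∧ le z y ∧ z ≠ x ∧ ht z = ht x + 1 := by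
  obtain ⟨z, ⟨hxz, hzx, hzy⟩, hmin⟩ := hP.wellFounded_lt.has_min
    {z | le x z ∧ z ≠ x ∧ le z y} ⟨y, hxy, hne.symm, hP.1 y⟩
  refine ⟨z, hxz, hzy, hzx, hP.2.2.2.2 x z hxz hzx.symm fun u hxu huz => ?_⟩
  by_contra! h
  exact hmin u ⟨hxu, h.1, hP.2.1 u z y huz hzy⟩ ⟨huz, h.2⟩

theorem exists_le_ht_eq_zero (hP : IsLRPoset le ht) (x : Fin n) : ∃ y, le y x ∧ ht y = 0 := by
  obtain ⟨y, hyx, hmin⟩ := hP.wellFounded_lt.has_min {y | le y x} ⟨x, hP.1 x⟩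
  refine ⟨y, hyx, hP.2.2.2.1 y fun u huy => ?_⟩
  by_contra h
  exact hmin u (hP.2.1 u y x huy hyx) ⟨huy, h⟩

theorem exists_between_of_even_iff (hP : IsLRPoset le ht) {x y : Fin n} (hxy : le x y)
    (hne : x ≠ y) (hpar : Even (ht x) ↔ Even (ht y)) :
    ∃ z, le x z ∧ le z y ∧ z ≠ x ∧ z ≠ y ∧ (Even (ht z) ↔ ¬Even (ht x)) := by
  obtain ⟨z, hxz, hzy, hzx, hz⟩ := hP.exists_ht_succ_between hxy hne
  have hzpar : Even (ht z) ↔ ¬Even (ht x) := by rw [hz, Nat.even_add_one]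
  exact ⟨z, hxz, hzy, hzx, by rintro rfl; tauto, hzpar⟩

end IsLRPoset

theorem List.prod_ofFn_sum {R α : Type*} [Semiring R] [Fintype α] {N : ℕ} (f : Fin N → α → R) :
    (List.ofFn fun x => ∑ v, f x v).prod =
      ∑ c : Fin N → α, (List.ofFn fun x => f x (c x)).prod := by
  induction N with
  | zero => simp
  | succ N ih =>
    rw [List.ofFn_succ, List.prod_cons, ih, Finset.sum_mul_sum,
      ← (Fin.consEquiv fun _ => α).sum_comp, Fintype.sum_prod_type]
    simp [Fin.consEquiv, List.ofFn_succ]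

theorem List.prod_ofFn_ite {R : Type*} [MonoidWithZero R] {N : ℕ} (p : Fin N → Prop)
    [DecidablePred p] (f : Fin N → R) :
    (List.ofFn fun x => if p x then f x else 0).prod
      = if ∀ x, p x then (List.ofFn f).prod else 0 := by
  split_ifs with h
  · simp only [h, if_true]
  · push Not at h
    obtain ⟨x, hx⟩ := h
    exact List.prod_eq_zero (List.mem_ofFn.2 ⟨x, if_neg hx⟩)

theorem Finset.sum_range_ite_eq_sum_of_iff {β : Type*} [AddCommMonoid β] {K : ℕ} {p : ℕ → Prop}
    [DecidablePred p] (s : Finset ℕ) (f : ℕ → β) (h : ∀ v, v < K ∧ p v ↔ v ∈ s) :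
    ∑ v ∈ range K, (if p v then f v else 0) = ∑ v ∈ s, f v := by
  rw [← Finset.sum_filter]
  congr 1
  ext v
  simp [h]

theorem Finset.sum_range_ite_and_eq {β : Type*} [AddCommMonoid β] {K w : ℕ} (hw : w < K)
    (p : ℕ → Prop) [DecidablePred p] (f : ℕ → β) :
    ∑ v ∈ range K, (if p v ∧ v = w then f v else 0) = if p w then f w else 0 := by
  rw [Finset.sum_eq_single_of_mem w (Finset.mem_range.2 hw) fun v _ hv => if_neg fun h => hv h.2]
  simp only [and_true]

def ncLetter (h v : ℕ) : ℕ ⊕ ℕ := if Even h then .inl v else .inr v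

def ncWord {n : ℕ} (ht : Fin n → ℕ) (g : Fin n → ℕ) : NC2 :=
  MonoidAlgebra.of ℚ (FreeMonoid (ℕ ⊕ ℕ))
    (FreeMonoid.ofList (List.ofFn fun x => ncLetter (ht x) (g x)))

def IsAdmissible {n : ℕ} (le : Fin n → Fin n → Prop) (ht : Fin n → ℕ) (m : ℕ) (r : Fin n → ℕ) :
    Prop :=
  (∀ x y, le x y → r x ≤ r y) ∧ (∀ x y, le x y → x ≠ y → Odd (ht x) → r x < r y) ∧
    ∀ x, r x ≤ m ∧ (Odd (ht x) → r x < m)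

section Substitution

variable {n : ℕ} (le : Fin n → Fin n → Prop) (ht : Fin n → ℕ)

theorem ncN_eq_sum (m : ℕ) :
    ncN le ht m = ∑ r : Fin n → Fin (m + 1),
      if IsAdmissible le ht m (fun x => r x) then ncWord ht (fun x => r x) else 0 := by
  refine Finset.sum_congr rfl fun r _ => if_congr ?_ rfl rfl
  simp only [NCOrderCond, IsAdmissible, Fin.le_def, Fin.lt_def]
  have := fun x => Nat.lt_succ_iff.1 (r x).2
  grind

theorem ncSubst2_ncWord (φ : ℕ ⊕ ℕ → NC2) (g : Fin n → ℕ) :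
    ncSubst2 φ (ncWord ht g) = (List.ofFn fun x => φ (ncLetter (ht x) (g x))).prod := by
  rw [ncWord, ncSubst2, MonoidAlgebra.lift_of, FreeMonoid.lift_apply, FreeMonoid.toList_ofList,
    List.map_ofFn]
  rfl

theorem ncWord_eq_prod (g : Fin n → ℕ) :
    ncWord ht g = (List.ofFn fun x => bd (ncLetter (ht x) (g x))).prod := by
  suffices h : ∀ l : List (ℕ ⊕ ℕ),
      MonoidAlgebra.of ℚ (FreeMonoid (ℕ ⊕ ℕ)) (FreeMonoid.ofList l) = (l.map bd).prod by
    rw [ncWord, h, List.map_ofFn]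
    rfl
  intro l
  induction l with
  | nil => exact map_one _
  | cons s l ih => rw [List.map_cons, List.prod_cons, ← ih, bd, ← map_mul]; rfl

/-- After expanding the products of fibre sums, a labelling `g` by `{0,…,K-1}` comes from the
single labelling `π ∘ g`, so no word is counted twice. -/
theorem ncSubst2_ncN_eq_sum_fiber (m K : ℕ) (A : ℕ → ℕ → Prop) [DecidableRel A] (π : ℕ → ℕ)
    (φ : ℕ ⊕ ℕ → NC2)
    (hφ : ∀ h, ∀ w ≤ m,
      φ (ncLetter h w) = ∑ v ∈ Finset.range K, if A h v ∧ π v = w then bd (ncLetter h v) else 0) :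
    ncSubst2 φ (ncN le ht m) = ∑ g : Fin n → Fin K,
      if (∀ x, A (ht x) (g x)) ∧ IsAdmissible le ht m (fun x => π (g x))
      then ncWord ht (fun x => g x) else 0 := by
  have expand : ∀ r : Fin n → Fin (m + 1), ncSubst2 φ (ncWord ht fun x => r x) =
      ∑ g : Fin n → Fin K,
        if ∀ x, A (ht x) (g x) ∧ π (g x) = r x then ncWord ht (fun x => g x) else 0 := by
    intro r
    simp_rw [ncSubst2_ncWord, hφ _ _ (Nat.lt_succ_iff.1 (r _).2), ← Fin.sum_univ_eq_sum_range,
      List.prod_ofFn_sum, List.prod_ofFn_ite, ncWord_eq_prod]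
  rw [ncN_eq_sum, map_sum]
  simp_rw [apply_ite (ncSubst2 φ), map_zero, expand, Finset.ite_sum_zero, ← ite_and]
  rw [Finset.sum_comm]
  refine Finset.sum_congr rfl fun g _ => ?_
  rw [Finset.sum_ite_zero _ _ fun r _ r' _ hr hr' => funext fun x => Fin.ext <|
    (hr.2 x).2.symm.trans (hr'.2 x).2]
  refine if_congr ⟨?_, fun ⟨hA, hadm⟩ => ?_⟩ rfl rfl
  · rintro ⟨r, -, hadm, hr⟩
    rw [show (fun x => (r x : ℕ)) = fun x => π (g x) from funext fun x => (hr x).2.symm] at hadm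
    exact ⟨fun x => (hr x).1, hadm⟩
  · exact ⟨fun x => ⟨π (g x), Nat.lt_succ_iff.2 (hadm.2.2 x).1⟩, Finset.mem_univ _, hadm,
      fun x => ⟨hA x, rfl⟩⟩

end Substitution

section Merge

variable {n : ℕ} {le : Fin n → Fin n → Prop} {ht : Fin n → ℕ}

theorem isAdmissible_succ_iff_of_odd_ne (hP : IsLRPoset le ht) {M i : ℕ} (hi : i ≤ M)
    {g : Fin n → ℕ} (hodd : ∀ x, Odd (ht x) → g x ≠ i) :
    IsAdmissible le ht (M + 1) g ↔
      IsAdmissible le ht M fun x => if g x ≤ i then g x else g x - 1 := by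
  constructor
  · rintro ⟨hmono, hstrict, hbd⟩
    refine ⟨fun x y hxy => ?_, fun x y hxy hne hx => ?_, fun x => ⟨?_, fun hx => ?_⟩⟩
    · have := hmono x y hxy
      dsimp only
      split_ifs <;> omega
    · have := hstrict x y hxy hne hx
      have := hodd x hx
      dsimp only
      split_ifs <;> omega
    · have := (hbd x).1
      dsimp only
      split_ifs <;> omega
    · have := (hbd x).2 hx
      have := hodd x hx
      dsimp only
      split_ifs <;> omega
  · rintro ⟨hmono, hstrict, hbd⟩
    dsimp only at hmono hstrict hbd
    refine ⟨fun x y hxy => ?_, fun x y hxy hne hx => ?_, fun x => ⟨?_, fun hx => ?_⟩⟩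
    · by_contra hlt
      have hmxy := hmono x y hxy
      have hxi : g x = i + 1 ∧ g y = i := by split_ifs at hmxy <;> omega
      have hne : x ≠ y := by rintro rfl; omega
      have hx : Even (ht x) := by
        by_contra hx
        have := hstrict x y hxy hne (Nat.not_even_iff_odd.1 hx)
        split_ifs at this <;> omega
      have hy : Even (ht y) := by
        by_contra hy
        exact hodd y (Nat.not_even_iff_odd.1 hy) hxi.2
      obtain ⟨z, hxz, hzy, hzx, hzy', hz⟩ := hP.exists_between_of_even_iff hxy hne (by tauto)
      have hxz' := hmono x z hxz
      have hzy'' := hstrict z y hzy hzy' (Nat.not_even_iff_odd.1 (by tauto))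
      split_ifs at hxz' hzy'' <;> omega
    · have := hstrict x y hxy hne hx
      split_ifs at this <;> omega
    · have := (hbd x).1
      split_ifs at this <;> omega
    · have := (hbd x).2 hx
      split_ifs at this <;> omega

/-- For `i = 0` the truncated `g x - 1` also merges the labels `0` and `1`, which is why odd
elements must avoid the label `0` then. -/
theorem isAdmissible_succ_iff_of_even_ne (hP : IsLRPoset le ht) {M i : ℕ} (hi : i ≤ M)
    {g : Fin n → ℕ} (heven : ∀ x, Even (ht x) → g x ≠ i) :
    IsAdmissible le ht (M + 1) g ↔
      (∀ x, i = 0 → 0 < g x) ∧ IsAdmissible le ht M fun x => if g x < i then g x else g x - 1 := by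
  constructor
  · rintro ⟨hmono, hstrict, hbd⟩
    have hpos : ∀ x, i = 0 → 0 < g x := fun x hi0 => by
      obtain ⟨y, hyx, hy⟩ := hP.exists_le_ht_eq_zero x
      have := hmono y x hyx
      have := heven y (hy ▸ Even.zero)
      omega
    refine ⟨hpos, fun x y hxy => ?_, fun x y hxy hne hx => ?_, fun x => ⟨?_, fun hx => ?_⟩⟩
    · have := hmono x y hxy
      dsimp only
      split_ifs <;> omega
    · have hxy' := hstrict x y hxy hne hx
      by_contra hlt
      dsimp only at hlt
      have := hpos x
      have hxi : g x + 1 = i ∧ g y = i := by split_ifs at hlt <;> omega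
      have hy : ¬Even (ht y) := fun hy => heven y hy hxi.2
      have hxodd : ¬Even (ht x) := Nat.not_even_iff_odd.2 hx
      obtain ⟨z, hxz, hzy, hzx, -, hz⟩ := hP.exists_between_of_even_iff hxy hne (by tauto)
      have := hstrict x z hxz hzx.symm hx
      have := hmono z y hzy
      have := heven z (by tauto)
      omega
    · have := (hbd x).1
      dsimp only
      split_ifs <;> omega
    · have := (hbd x).2 hx
      have := hpos x
      dsimp only
      split_ifs <;> omega
  · rintro ⟨hpos, hmono, hstrict, hbd⟩
    dsimp only at hmono hstrict hbd
    refine ⟨fun x y hxy => ?_, fun x y hxy hne hx => ?_, fun x => ⟨?_, fun hx => ?_⟩⟩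
    · by_contra hlt
      have hmxy := hmono x y hxy
      have hpy := hpos y
      have hxi : g x = i := by split_ifs at hmxy <;> omega
      have hne : x ≠ y := by rintro rfl; omega
      have hx : Odd (ht x) := Nat.not_even_iff_odd.1 fun hx => heven x hx hxi
      have := hstrict x y hxy hne hx
      split_ifs at this <;> omega
    · have := hstrict x y hxy hne hx
      split_ifs at this <;> omega
    · have := (hbd x).1
      split_ifs at this <;> omega
    · have := (hbd x).2 hx
      split_ifs at this <;> omega

end Merge

section Substitutions

variable (i : ℕ)

abbrev ncKillD : ℕ ⊕ ℕ → NC2 :=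
  Sum.elim (fun j => bd (Sum.inl j)) (fun j => if j = i then 0 else bd (Sum.inr j))

abbrev ncKillB : ℕ ⊕ ℕ → NC2 :=
  Sum.elim (fun j => if j = i then 0 else bd (Sum.inl j)) (fun j => bd (Sum.inr j))

abbrev ncSplitB : ℕ ⊕ ℕ → NC2 :=
  Sum.elim
    (fun j => if j < i then bd (Sum.inl j)
      else if j = i then bd (Sum.inl i) + bd (Sum.inl (i + 1)) else bd (Sum.inl (j + 1)))
    (fun j => if j < i then bd (Sum.inr j) else bd (Sum.inr (j + 1)))

abbrev ncSplitD : ℕ ⊕ ℕ → NC2 :=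
  Sum.elim
    (fun j => if j < i then bd (Sum.inl j) else bd (Sum.inl (j + 1)))
    (fun j => if j + 1 < i then bd (Sum.inr j)
      else if j + 1 = i then bd (Sum.inr j) + bd (Sum.inr (j + 1))
      else bd (Sum.inr (j + 1)))

theorem ncKillD_ncLetter {K : ℕ} (h : ℕ) {w : ℕ} (hw : w < K) :
    ncKillD i (ncLetter h w) = ∑ v ∈ Finset.range K,
      if (Odd h → v ≠ i) ∧ v = w then bd (ncLetter h v) else 0 := by
  rw [Finset.sum_range_ite_and_eq hw]
  by_cases he : Even h
  · simp [ncLetter, he]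
  · simp [ncLetter, he, Nat.not_even_iff_odd.1 he, eq_comm]

theorem ncKillB_ncLetter {K : ℕ} (h : ℕ) {w : ℕ} (hw : w < K) :
    ncKillB i (ncLetter h w) = ∑ v ∈ Finset.range K,
      if (Even h → v ≠ i) ∧ v = w then bd (ncLetter h v) else 0 := by
  rw [Finset.sum_range_ite_and_eq hw]
  by_cases he : Even h
  · simp [ncLetter, he, eq_comm]
  · simp [ncLetter, he]

theorem ncSplitB_ncLetter {M : ℕ} (h : ℕ) {w : ℕ} (hw : w ≤ M) :
    ncSplitB i (ncLetter h w) = ∑ v ∈ Finset.range (M + 2),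
      if (Odd h → v ≠ i) ∧ (if v ≤ i then v else v - 1) = w then bd (ncLetter h v) else 0 := by
  by_cases he : Even h
  · have ho : ¬Odd h := Nat.not_odd_iff_even.2 he
    simp only [ncLetter, he, if_true, Sum.elim_inl, ho, false_imp_iff, true_and]
    rcases lt_trichotomy w i with hwi | rfl | hwi
    · rw [if_pos hwi, Finset.sum_range_ite_eq_sum_of_iff {w}, Finset.sum_singleton]
      intro v; simp only [Finset.mem_singleton]; split_ifs <;> omega
    · rw [if_neg (lt_irrefl w), if_pos rfl, Finset.sum_range_ite_eq_sum_of_iff {w, w + 1},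
        Finset.sum_pair (by omega)]
      intro v; simp only [Finset.mem_insert, Finset.mem_singleton]; split_ifs <;> omega
    · rw [if_neg (by omega), if_neg (by omega), Finset.sum_range_ite_eq_sum_of_iff {w + 1},
        Finset.sum_singleton]
      intro v; simp only [Finset.mem_singleton]; split_ifs <;> omega
  · simp only [ncLetter, he, if_false, Sum.elim_inr, Nat.not_even_iff_odd.1 he, true_imp_iff]
    rcases lt_or_ge w i with hwi | hwi
    · rw [if_pos hwi, Finset.sum_range_ite_eq_sum_of_iff {w}, Finset.sum_singleton]
      intro v; simp only [Finset.mem_singleton]; split_ifs <;> omega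
    · rw [if_neg (by omega), Finset.sum_range_ite_eq_sum_of_iff {w + 1}, Finset.sum_singleton]
      intro v; simp only [Finset.mem_singleton]; split_ifs <;> omega

theorem ncSplitD_ncLetter {M : ℕ} (h : ℕ) {w : ℕ} (hw : w ≤ M) :
    ncSplitD i (ncLetter h w) = ∑ v ∈ Finset.range (M + 2),
      if ((Even h → v ≠ i) ∧ (i = 0 → 0 < v)) ∧ (if v < i then v else v - 1) = w
      then bd (ncLetter h v) else 0 := by
  by_cases he : Even h
  · simp only [ncLetter, he, if_true, Sum.elim_inl, true_imp_iff]
    rcases lt_or_ge w i with hwi | hwi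
    · rw [if_pos hwi, Finset.sum_range_ite_eq_sum_of_iff {w}, Finset.sum_singleton]
      intro v; simp only [Finset.mem_singleton]; split_ifs <;> omega
    · rw [if_neg (by omega), Finset.sum_range_ite_eq_sum_of_iff {w + 1}, Finset.sum_singleton]
      intro v; simp only [Finset.mem_singleton]; split_ifs <;> omega
  · simp only [ncLetter, he, if_false, Sum.elim_inr, false_imp_iff, true_and]
    rcases lt_trichotomy (w + 1) i with hwi | hwi | hwi
    · rw [if_pos hwi, Finset.sum_range_ite_eq_sum_of_iff {w}, Finset.sum_singleton]
      intro v; simp only [Finset.mem_singleton]; split_ifs <;> omega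
    · rw [if_neg (by omega), if_pos hwi, Finset.sum_range_ite_eq_sum_of_iff {w, w + 1},
        Finset.sum_pair (by omega)]
      intro v; simp only [Finset.mem_insert, Finset.mem_singleton]; split_ifs <;> omega
    · rw [if_neg (by omega), if_neg (by omega), Finset.sum_range_ite_eq_sum_of_iff {w + 1},
        Finset.sum_singleton]
      intro v; simp only [Finset.mem_singleton]; split_ifs <;> omega

end Substitutions

/-- Indices are `0`-based: the paper's `i` is `i + 1` here, and `m ≥ 1, 1 ≤ i ≤ m` becomes
`1 ≤ m, i < m`. -/
theorem stmt13 (n : ℕ) (le : Fin n → Fin n → Prop) (ht : Fin n → ℕ)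
    (hP : IsLRPoset le ht) (m i : ℕ) (hm : 1 ≤ m) (hi : i < m) :
    (ncSubst2 (Sum.elim (fun j => bd (Sum.inl j))
        (fun j => if j = i then 0 else bd (Sum.inr j)))
      (ncN le ht m) =
      ncSubst2 (Sum.elim
        (fun j => if j < i then bd (Sum.inl j)
          else if j = i then bd (Sum.inl i) + bd (Sum.inl (i + 1)) else bd (Sum.inl (j + 1)))
        (fun j => if j < i then bd (Sum.inr j) else bd (Sum.inr (j + 1))))
      (ncN le ht (m - 1))) ∧
    (ncSubst2 (Sum.elim (fun j => if j = i then 0 else bd (Sum.inl j))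
        (fun j => bd (Sum.inr j)))
      (ncN le ht m) =
      ncSubst2 (Sum.elim
        (fun j => if j < i then bd (Sum.inl j) else bd (Sum.inl (j + 1)))
        (fun j => if j + 1 < i then bd (Sum.inr j)
          else if j + 1 = i then bd (Sum.inr j) + bd (Sum.inr (j + 1))
          else bd (Sum.inr (j + 1))))
      (ncN le ht (m - 1))) := by
  obtain ⟨M, rfl⟩ : ∃ M, m = M + 1 := ⟨m - 1, by omega⟩
  have hiM : i ≤ M := by omega
  rw [Nat.add_sub_cancel]
  constructor
  · rw [ncSubst2_ncN_eq_sum_fiber le ht (M + 1) (M + 2) (fun h v => Odd h → v ≠ i) id (ncKillD i)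
        fun h w hw => ncKillD_ncLetter i (K := M + 2) h (Nat.lt_succ_iff.2 hw),
      ncSubst2_ncN_eq_sum_fiber le ht M (M + 2) _ _ (ncSplitB i)
        fun h w hw => ncSplitB_ncLetter i h hw]
    exact Finset.sum_congr rfl fun g _ => if_congr
      (and_congr_right fun hodd => isAdmissible_succ_iff_of_odd_ne hP hiM hodd) rfl rfl
  · rw [ncSubst2_ncN_eq_sum_fiber le ht (M + 1) (M + 2) (fun h v => Even h → v ≠ i) id (ncKillB i)
        fun h w hw => ncKillB_ncLetter i (K := M + 2) h (Nat.lt_succ_iff.2 hw),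
      ncSubst2_ncN_eq_sum_fiber le ht M (M + 2) _ _ (ncSplitD i)
        fun h w hw => ncSplitD_ncLetter i h hw]
    refine Finset.sum_congr rfl fun g _ => if_congr ?_ rfl rfl
    rw [forall_and, and_assoc]
    exact and_congr_right fun heven => isAdmissible_succ_iff_of_even_ne hP hiM heven
end
end

section
/- Let K be a set composition of {1,…,n} and K′ a set composition of {1,…,n′}. There exists a family (c_{K″}) of nonnegative integers indexed by the set compositions K″ of {1,…,n+n′} such that 𝐅_{P_K}^(N) · 𝐅_{P_{K′}}^(N) = Σ_{K″} c_{K″} 𝐅_{P_{K″}}^(N) in the free ℚ-algebra on a₁,…,a_N, for every N ≥ 1. (The multiplication table of the basis 𝐅_{P_K} has nonnegative integer entries.) -/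
open scoped Classical

noncomputable section

/-! The product `𝐅_{P_K} 𝐅_{P_{K'}}` is `𝐅` of the disjoint union `Q` of `P_K` and `P_{K'}`.
For a labelling `r`, put `D x = 2 r(x) + (ht x mod 2)`: `r` satisfies the order condition of `Q`
(or of any disjoint union of posets `P_K`) iff `D` strictly increases along its strict order.
The set compositions `K''` for which `r` satisfies the order condition of `P_{K''}`, with heights
of the same parity as in `Q`, are exactly those whose height function is a *parity compression*
of `D`: a monotone function of `D`, of the same parity, with an initial segment of `ℕ` as image.
Such a compression exists when the least value of `D` is even, and is unique: it merges runs of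
consecutive values of `D` of equal parity. It is then automatically strictly increasing along
`Q`, so every word of `𝐅_Q` occurs in exactly one `𝐅_{P_{K''}}` with `K''` of this kind, and all
coefficients are `0` or `1`. -/

section DisjointUnion

variable {n n' N : ℕ} {le : Fin n → Fin n → Prop} {le' : Fin n' → Fin n' → Prop}

lemma sumHt_eq_append (ht : Fin n → ℕ) (ht' : Fin n' → ℕ) :
    sumHt ht ht' = Fin.append ht ht' := by
  funext x
  refine Fin.addCases (fun i => ?_) (fun j => ?_) x <;> simp [sumHt]

@[simp]
lemma sumLe_castAdd_castAdd (i j : Fin n) :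
    sumLe le le' (Fin.castAdd n' i) (Fin.castAdd n' j) ↔ le i j := by
  simp [sumLe]

@[simp]
lemma sumLe_natAdd_natAdd (i j : Fin n') :
    sumLe le le' (Fin.natAdd n i) (Fin.natAdd n j) ↔ le' i j := by
  simp [sumLe]

@[simp]
lemma not_sumLe_castAdd_natAdd (i : Fin n) (j : Fin n') :
    ¬ sumLe le le' (Fin.castAdd n' i) (Fin.natAdd n j) := by
  simp [sumLe]

@[simp]
lemma not_sumLe_natAdd_castAdd (i : Fin n') (j : Fin n) :
    ¬ sumLe le le' (Fin.natAdd n i) (Fin.castAdd n' j) := by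
  simp [sumLe]

lemma orderCond_sumLe_append {ht : Fin n → ℕ} {ht' : Fin n' → ℕ} (r : Fin n → Fin N)
    (r' : Fin n' → Fin N) :
    NCOrderCond (sumLe le le') (sumHt ht ht') (Fin.append r r') ↔
      NCOrderCond le ht r ∧ NCOrderCond le' ht' r' := by
  simp only [NCOrderCond, Fin.forall_fin_add, Fin.append_left, Fin.append_right,
    sumLe_castAdd_castAdd, not_sumLe_castAdd_natAdd, IsEmpty.forall_iff, implies_true, and_true,
    not_sumLe_natAdd_castAdd, sumLe_natAdd_natAdd, true_and, ne_eq, sumHt_eq_append,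
    Fin.castAdd_inj, Fin.natAdd_inj]
  tauto

lemma ncF_mul (ht : Fin n → ℕ) (ht' : Fin n' → ℕ) (N : ℕ) :
    ncF le ht N * ncF le' ht' N = ncF (sumLe le le') (Fin.append ht ht') N := by
  rw [← sumHt_eq_append, ncF, ncF, ncF, Finset.sum_mul_sum, ← Fintype.sum_prod_type',
    ← (Fin.appendEquiv n n').sum_comp]
  refine Fintype.sum_congr _ _ fun ⟨r, r'⟩ => ?_
  have hword : (List.ofFn fun i => ((Fin.append r r' i : Fin N) : ℕ)) =
      (List.ofFn fun i => (r i : ℕ)) ++ List.ofFn fun i => (r' i : ℕ) := by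
    rw [← List.ofFn_fin_append]
    congr 1
    funext i
    refine Fin.addCases (fun i => ?_) (fun j => ?_) i <;> simp
  rw [show Fin.appendEquiv n n' (r, r') = Fin.append r r' from rfl, orderCond_sumLe_append, hword,
    FreeMonoid.ofList_append, map_mul]
  by_cases h : NCOrderCond le ht r <;> by_cases h' : NCOrderCond le' ht' r' <;> simp [h, h']

end DisjointUnion

section Layered

variable {m N : ℕ} {κ : Type*} (c : Fin m → κ) (h : Fin m → ℕ)

-- Under `IsLayered c h`, the disjoint union over the fibres of `c` of posets `P_K`, ranked by `h`.
def layerLe (x y : Fin m) : Prop := x = y ∨ c x = c y ∧ h x < h y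

def IsLayered : Prop := ∀ x, ∀ t < h x, ∃ z, c z = c x ∧ h z = t

def doubledLabel (r : Fin m → Fin N) (x : Fin m) : ℕ := 2 * r x + h x % 2

variable {c h}

lemma orderCond_layerLe_iff (hl : IsLayered c h) (r : Fin m → Fin N) :
    NCOrderCond (layerLe c h) h r ↔
      ∀ x y, c x = c y → h x < h y → doubledLabel h r x < doubledLabel h r y := by
  simp only [NCOrderCond, layerLe, doubledLabel, Fin.le_def, Fin.lt_def]
  constructor
  · rintro ⟨hle, hlt⟩ x y hc hxy
    have hrxy := hle x y (.inr ⟨hc, hxy⟩)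
    have hne : x ≠ y := by rintro rfl; omega
    rcases Nat.mod_two_eq_zero_or_one (h x) with hx | hx
    · rcases Nat.mod_two_eq_zero_or_one (h y) with hy | hy
      · -- between two even layers lies an odd one, where the label must increase strictly
        obtain ⟨z, hzc, hz⟩ := hl y (h x + 1) (by omega)
        have hxz := hle x z (.inr ⟨hzc.symm ▸ hc, by omega⟩)
        have hzy :=
          hlt z y (.inr ⟨hzc, by omega⟩) (by rintro rfl; omega) (Nat.odd_iff.2 (by omega))
        omega
      · omega
    · have := hlt x y (.inr ⟨hc, hxy⟩) hne (Nat.odd_iff.2 hx)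
      omega
  · intro hD
    refine ⟨?_, ?_⟩
    · rintro x y (rfl | ⟨hc, hxy⟩)
      · exact le_rfl
      · have := hD x y hc hxy
        omega
    · rintro x y (rfl | ⟨hc, hxy⟩) hne hx
      · exact absurd rfl hne
      · have := hD x y hc hxy
        have := Nat.odd_iff.1 hx
        omega

lemma sumLe_layerLe {n n' : ℕ} {κ' : Type*} (c : Fin n → κ) (h : Fin n → ℕ)
    (c' : Fin n' → κ') (h' : Fin n' → ℕ) :
    sumLe (layerLe c h) (layerLe c' h') =
      layerLe (Fin.append (Sum.inl ∘ c) (Sum.inr ∘ c')) (Fin.append h h') := by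
  funext x y
  refine Fin.addCases (fun i => ?_) (fun i => ?_) x <;>
    refine Fin.addCases (fun j => ?_) (fun j => ?_) y <;>
    simp [layerLe, Fin.ext_iff] <;> omega

lemma IsLayered.append {n n' : ℕ} {κ' : Type*} {c : Fin n → κ} {h : Fin n → ℕ}
    {c' : Fin n' → κ'} {h' : Fin n' → ℕ} (hl : IsLayered c h) (hl' : IsLayered c' h') :
    IsLayered (Fin.append (Sum.inl ∘ c) (Sum.inr ∘ c')) (Fin.append h h') := by
  intro x
  refine Fin.addCases (fun i t ht => ?_) (fun i t ht => ?_) x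
  · obtain ⟨z, hzc, hz⟩ := hl i t (by simpa using ht)
    exact ⟨Fin.castAdd n' z, by simp [hzc, hz]⟩
  · obtain ⟨z, hzc, hz⟩ := hl' i t (by simpa using ht)
    exact ⟨Fin.natAdd n z, by simp [hzc, hz]⟩

end Layered

section LowerClosedImage

variable {ι : Type*} [Fintype ι] {f : ι → ℕ}

lemma lt_card_image_of_forall_lt_exists (hf : ∀ x, ∀ t < f x, ∃ z, f z = t) (x : ι) :
    f x < (Finset.univ.image f).card := by
  have : Finset.range (f x + 1) ⊆ Finset.univ.image f := by
    intro t ht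
    rcases (Nat.lt_succ_iff.1 (Finset.mem_range.1 ht)).eq_or_lt with rfl | hlt
    · exact Finset.mem_image_of_mem f (Finset.mem_univ x)
    · obtain ⟨z, rfl⟩ := hf x t hlt
      exact Finset.mem_image_of_mem f (Finset.mem_univ z)
  simpa using Finset.card_le_card this

lemma exists_eq_of_lt_card_image (hf : ∀ x, ∀ t < f x, ∃ z, f z = t) {t : ℕ}
    (ht : t < (Finset.univ.image f).card) : ∃ x, f x = t := by
  have himage : Finset.univ.image f = Finset.range (Finset.univ.image f).card := by
    refine Finset.eq_of_subset_of_card_le (fun t ht => ?_) (by simp)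
    obtain ⟨x, -, rfl⟩ := Finset.mem_image.1 ht
    exact Finset.mem_range.2 (lt_card_image_of_forall_lt_exists hf x)
  rw [← Finset.mem_range, ← himage] at ht
  simpa using ht

end LowerClosedImage

namespace SetComp

variable {m : ℕ}

lemma le_eq_layerLe (K : SetComp m) : K.le = layerLe (fun _ => ()) K.ht := by
  funext x y
  simp [SetComp.le, layerLe, SetComp.ht]

lemma isLayered (K : SetComp m) : IsLayered (fun _ => ()) K.ht := by
  intro x t ht
  obtain ⟨z, hz⟩ := K.2 ⟨t, ht.trans (K.1.2 x).isLt⟩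
  exact ⟨z, rfl, congrArg Fin.val hz⟩

lemma image_ht (K : SetComp m) : Finset.univ.image K.ht = Finset.range K.1.1 := by
  ext t
  simp only [Finset.mem_image, Finset.mem_univ, true_and, Finset.mem_range]
  refine ⟨fun ⟨x, hx⟩ => hx ▸ (K.1.2 x).isLt, fun ht => ?_⟩
  obtain ⟨x, hx⟩ := K.2 ⟨t, ht⟩
  exact ⟨x, congrArg Fin.val hx⟩

lemma ht_injective : Function.Injective (SetComp.ht : SetComp m → Fin m → ℕ) := by
  intro K K' h
  have hℓ : K.1.1 = K'.1.1 := Fin.ext (by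
    simpa [image_ht] using congrArg (fun f => (Finset.univ.image f).card) h)
  obtain ⟨⟨ℓ, f⟩, hf⟩ := K
  obtain ⟨⟨ℓ', f'⟩, hf'⟩ := K'
  subst hℓ
  obtain rfl : f = f' := funext fun x => Fin.ext (congrFun h x)
  rfl

def ofFun (f : Fin m → ℕ) (hf : ∀ x, ∀ t < f x, ∃ z, f z = t) : SetComp m :=
  ⟨⟨⟨(Finset.univ.image f).card, Nat.lt_succ_of_le (Finset.card_image_le.trans (by simp))⟩,
    fun x => ⟨f x, lt_card_image_of_forall_lt_exists hf x⟩⟩, fun t => by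
      obtain ⟨x, hx⟩ := exists_eq_of_lt_card_image hf t.isLt
      exact ⟨x, Fin.ext hx⟩⟩

end SetComp

section ParityCompression

variable {ι : Type*}

def IsParityCompression (G f : ι → ℕ) : Prop :=
  (∀ x, f x % 2 = G x % 2) ∧ (∀ x y, G x ≤ G y → f x ≤ f y) ∧ ∀ x, ∀ t < f x, ∃ z, f z = t

namespace IsParityCompression

variable {G f : ι → ℕ}

lemma lt_of_lt (hf : IsParityCompression G f) {x y : ι} (hxy : f x < f y) : G x < G y :=
  lt_of_not_ge fun hyx => (hf.2.1 y x hyx).not_gt hxy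

lemma eq_zero_of_isMin (hf : IsParityCompression G f) {x : ι} (hx : ∀ z, G x ≤ G z) :
    f x = 0 := by
  by_contra hne
  obtain ⟨z, hz⟩ := hf.2.2 x 0 (Nat.pos_of_ne_zero hne)
  exact (hx z).not_gt (hf.lt_of_lt (hz ▸ Nat.pos_of_ne_zero hne))

lemma le_add_one_of_forall_lt (hf : IsParityCompression G f) {x y : ι}
    (hy : ∀ z, G z < G x → G z ≤ G y) : f x ≤ f y + 1 := by
  by_contra! hlt
  obtain ⟨z, hz⟩ := hf.2.2 x (f y + 1) hlt
  exact (hy z (hf.lt_of_lt (hz ▸ hlt))).not_gt (hf.lt_of_lt (by omega))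

theorem unique [Fintype ι] {f' : ι → ℕ} (hf : IsParityCompression G f)
    (hf' : IsParityCompression G f') : f = f' := by
  funext x
  induction hx : G x using Nat.strong_induction_on generalizing x with
  | _ v ih =>
  subst hx
  by_cases hlow : ∃ y, G y < G x
  · obtain ⟨y, hy, hmax⟩ := (Finset.univ.filter (G · < G x)).exists_max_image G
      (by simpa [Finset.filter_nonempty_iff] using hlow)
    simp only [Finset.mem_filter, Finset.mem_univ, true_and] at hy hmax
    -- both values lie in `{f y, f y + 1}` and have the parity of `G x`
    have hy_eq : f y = f' y := ih _ hy y rfl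
    have := hf.le_add_one_of_forall_lt hmax
    have := hf'.le_add_one_of_forall_lt hmax
    have := hf.2.1 y x hy.le
    have := hf'.2.1 y x hy.le
    have := hf.1 x
    have := hf'.1 x
    omega
  · simp only [not_exists, not_lt] at hlow
    rw [hf.eq_zero_of_isMin hlow, hf'.eq_zero_of_isMin hlow]

end IsParityCompression

lemma exists_parityCompression_finset (S : Finset ℕ)
    (hS : ∀ a ∈ S, (∀ b ∈ S, a ≤ b) → a % 2 = 0) :
    ∃ φ : ℕ → ℕ, (∀ a ∈ S, φ a % 2 = a % 2) ∧ (∀ a ∈ S, ∀ b ∈ S, a ≤ b → φ a ≤ φ b) ∧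
      ∀ a ∈ S, ∀ t < φ a, ∃ b ∈ S, φ b = t := by
  induction S using Finset.induction_on_max with
  | empty => exact ⟨id, by simp⟩
  | insert a s has ih =>
    rcases s.eq_empty_or_nonempty with rfl | hs
    · refine ⟨fun _ => 0, ?_⟩
      simpa using (hS a (by simp) (by simp)).symm
    have hmin : ∀ b ∈ s, (∀ c ∈ s, b ≤ c) → b % 2 = 0 := fun b hb hbmin =>
      hS b (Finset.mem_insert_of_mem hb) (by
        simpa only [Finset.mem_insert, forall_eq_or_imp] using ⟨(has b hb).le, hbmin⟩)
    obtain ⟨φ, hpar, hmono, hdown⟩ := ih hmin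
    set p := s.max' hs
    have hp : p ∈ s := s.max'_mem hs
    -- `a` joins the block of `p` or opens the next one, according to the parity of `a - p`
    let ψ : ℕ → ℕ := fun b => if b = a then φ p + (p + a) % 2 else φ b
    have hψa : ψ a = φ p + (p + a) % 2 := if_pos rfl
    have hψ : ∀ b ∈ s, ψ b = φ b := fun b hb => if_neg (has b hb).ne
    have hφp : ∀ b ∈ s, φ b ≤ φ p := fun b hb => hmono b hb p hp (s.le_max' b hb)
    have hψdown : ∀ t < φ p + 1, ∃ c ∈ insert a s, ψ c = t := by
      intro t ht
      rcases (Nat.lt_succ_iff.1 ht).eq_or_lt with rfl | hlt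
      · exact ⟨p, Finset.mem_insert_of_mem hp, hψ p hp⟩
      · obtain ⟨c, hc, rfl⟩ := hdown p hp t hlt
        exact ⟨c, Finset.mem_insert_of_mem hc, hψ c hc⟩
    refine ⟨ψ, fun b hb => ?_, fun b hb c hc hbc => ?_, fun b hb t ht => ?_⟩
    · rcases Finset.mem_insert.1 hb with rfl | hb
      · have := hpar p hp
        omega
      · rw [hψ b hb, hpar b hb]
    · rcases Finset.mem_insert.1 hb with rfl | hbs <;>
        rcases Finset.mem_insert.1 hc with rfl | hcs
      · exact le_rfl
      · exact absurd hbc (has c hcs).not_ge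
      · rw [hψ b hbs, hψa]
        exact (hφp b hbs).trans (Nat.le_add_right _ _)
      · rw [hψ b hbs, hψ c hcs]
        exact hmono b hbs c hcs hbc
    · rcases Finset.mem_insert.1 hb with rfl | hb
      · exact hψdown t (by omega)
      · exact hψdown t (by have := hφp b hb; rw [hψ b hb] at ht; omega)

lemma exists_isParityCompression [Fintype ι] (G : ι → ℕ)
    (hG : ∀ x, (∀ y, G x ≤ G y) → G x % 2 = 0) :
    ∃ f, IsParityCompression G f := by
  obtain ⟨φ, hpar, hmono, hdown⟩ := exists_parityCompression_finset (Finset.univ.image G)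
    (by simpa using hG)
  refine ⟨φ ∘ G, fun x => hpar _ (by simp), fun x y hxy => hmono _ (by simp) _ (by simp) hxy,
    fun x t ht => ?_⟩
  obtain ⟨b, hb, rfl⟩ := hdown _ (by simp) t ht
  obtain ⟨z, -, rfl⟩ := Finset.mem_image.1 hb
  exact ⟨z, rfl⟩

end ParityCompression

section Decomposition

variable {m N : ℕ} {κ : Type*} {c : Fin m → κ} {h : Fin m → ℕ}

variable (c h) in
def IsParityExtension (f : Fin m → ℕ) : Prop :=
  (∀ x, f x % 2 = h x % 2) ∧ ∀ x y, c x = c y → h x < h y → f x < f y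

lemma doubledLabel_mod_two (r : Fin m → Fin N) (x : Fin m) :
    doubledLabel h r x % 2 = h x % 2 := by
  simp [doubledLabel]

lemma orderCond_setComp_iff {K : SetComp m} (hpar : ∀ x, K.ht x % 2 = h x % 2)
    (r : Fin m → Fin N) :
    NCOrderCond K.le K.ht r ↔ IsParityCompression (doubledLabel h r) K.ht := by
  have hD : doubledLabel K.ht r = doubledLabel h r :=
    funext fun x => by simp [doubledLabel, hpar]
  rw [K.le_eq_layerLe, orderCond_layerLe_iff K.isLayered, hD]
  refine ⟨fun hr => ⟨fun x => by rw [hpar, doubledLabel_mod_two], fun x y hxy => ?_,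
    fun x t ht => ?_⟩, fun hf x y _ hxy => hf.lt_of_lt hxy⟩
  · exact le_of_not_gt fun hyx => (hr y x rfl hyx).not_ge hxy
  · obtain ⟨z, -, hz⟩ := K.isLayered x t ht
    exact ⟨z, hz⟩

lemma doubledLabel_mod_two_eq_zero_of_min (hl : IsLayered c h) {r : Fin m → Fin N}
    (hr : ∀ x y, c x = c y → h x < h y → doubledLabel h r x < doubledLabel h r y) (x : Fin m)
    (hx : ∀ y, doubledLabel h r x ≤ doubledLabel h r y) : doubledLabel h r x % 2 = 0 := by
  by_contra hodd
  rw [doubledLabel_mod_two] at hodd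
  obtain ⟨z, hzc, hz⟩ := hl x 0 (by omega)
  exact (hx z).not_gt (hr z x hzc (by omega))

lemma IsParityCompression.isParityExtension (hl : IsLayered c h) {r : Fin m → Fin N}
    (hr : ∀ x y, c x = c y → h x < h y → doubledLabel h r x < doubledLabel h r y)
    {f : Fin m → ℕ} (hf : IsParityCompression (doubledLabel h r) f) :
    IsParityExtension c h f := by
  have hpar : ∀ x, f x % 2 = h x % 2 := fun x => by rw [hf.1, doubledLabel_mod_two]
  refine ⟨hpar, fun x y hc hxy => ?_⟩
  have hle := hf.2.1 x y (hr x y hc hxy).le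
  by_cases hxy' : h x % 2 = h y % 2
  · -- pass through the next layer up from `x`, of the other parity
    obtain ⟨z, hzc, hz⟩ := hl y (h x + 1) (by omega)
    have hxz := hf.2.1 x z (hr x z (hzc.trans hc.symm).symm (by omega)).le
    have hzy := hf.2.1 z y (hr z y hzc (by omega)).le
    have := hpar x
    have := hpar z
    omega
  · have := hpar x
    have := hpar y
    omega

lemma orderCond_layerLe_of_setComp (hl : IsLayered c h) {K : SetComp m}
    (hK : IsParityExtension c h K.ht) {r : Fin m → Fin N} (hr : NCOrderCond K.le K.ht r) :
    NCOrderCond (layerLe c h) h r :=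
  (orderCond_layerLe_iff hl r).2 fun x y hc hxy =>
    ((orderCond_setComp_iff hK.1 r).1 hr).lt_of_lt (hK.2 x y hc hxy)

lemma existsUnique_setComp (hl : IsLayered c h) {r : Fin m → Fin N}
    (hr : NCOrderCond (layerLe c h) h r) :
    ∃! K : SetComp m, IsParityExtension c h K.ht ∧ NCOrderCond K.le K.ht r := by
  rw [orderCond_layerLe_iff hl] at hr
  obtain ⟨f, hf⟩ := exists_isParityCompression _ (doubledLabel_mod_two_eq_zero_of_min hl hr)
  have hK := hf.isParityExtension hl hr
  refine ⟨SetComp.ofFun f hf.2.2, ⟨hK, (orderCond_setComp_iff hK.1 r).2 hf⟩, ?_⟩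
  rintro K ⟨hK', hrK⟩
  exact SetComp.ht_injective (((orderCond_setComp_iff hK'.1 r).1 hrK).unique hf)

theorem ncF_layerLe_eq_sum (hl : IsLayered c h) (N : ℕ) :
    ncF (layerLe c h) h N =
      ∑ K ∈ Finset.univ.filter (fun K : SetComp m => IsParityExtension c h K.ht),
        ncF K.le K.ht N := by
  simp only [ncF]
  rw [Finset.sum_comm]
  refine Finset.sum_congr rfl fun r _ => ?_
  simp only [Finset.sum_filter, ← ite_and]
  by_cases hr : NCOrderCond (layerLe c h) h r
  · obtain ⟨K, hK, huniq⟩ := existsUnique_setComp hl hr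
    rw [if_pos hr, Finset.sum_eq_single K (fun K' _ hne => if_neg fun hK' => hne (huniq K' hK'))
      (by simp), if_pos hK]
  · rw [if_neg hr]
    exact (Finset.sum_eq_zero fun K _ =>
      if_neg fun hK => hr (orderCond_layerLe_of_setComp hl hK.1 hK.2)).symm

end Decomposition

/-- For set compositions `K` of `{1,…,n}` and `K'` of `{1,…,n'}`, the
product `𝐅_{P_K}^(N) · 𝐅_{P_{K'}}^(N)` is a linear combination with nonnegative integer
coefficients of the `𝐅_{P_{K''}}^(N)`, `K''` ranging over the set compositions of
`{1,…,n+n'}`, simultaneously for every `N ≥ 1`. -/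
theorem stmt19 (n n' : ℕ) (K : SetComp n) (K' : SetComp n') :
    ∃ c : SetComp (n + n') → ℕ, ∀ N : ℕ, 1 ≤ N →
      ncF K.le K.ht N * ncF K'.le K'.ht N =
        ∑ K'' : SetComp (n + n'), (c K'' : ℚ) • ncF K''.le K''.ht N := by
  let IsSummand (K'' : SetComp (n + n')) : Prop := IsParityExtension
    (Fin.append (Sum.inl ∘ fun _ => ()) (Sum.inr ∘ fun _ => ())) (Fin.append K.ht K'.ht) K''.ht
  refine ⟨fun K'' => if IsSummand K'' then 1 else 0, fun N _ => ?_⟩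
  rw [ncF_mul, K.le_eq_layerLe, K'.le_eq_layerLe, sumLe_layerLe,
    ncF_layerLe_eq_sum (K.isLayered.append K'.isLayered), Finset.sum_filter]
  simp [IsSummand]
end
end
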